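/- arXiv:1808.01701 — 8 statements merged into one kernel-verified Lean document; each statement's English description precedes it below -/
import Mathlib

section
/- Let 𝒳, 𝒴, 𝒵 be finite-dimensional complex Hilbert spaces, let 𝒱 ⊆ 𝒳⊗𝒴⊗𝒵 be a subspace, and let U be a unitary operator on 𝒳⊗𝒴⊗𝒵 that is 𝒴→𝒳 causal on 𝒱. Then for every Hermitian operator H on 𝒳⊗𝒴⊗𝒵 satisfying im(H) ⊆ 𝒱 and Tr_𝒵(H) = 0, and every linear operator X on 𝒳, one has ⟨H, U*(X⊗1_{𝒴⊗𝒵})U⟩ = 0. -/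
/-!
Split the Hermitian `H` by functional calculus into its positive and negative parts,
`H = P - N`. Both are of the form `H * g(H)`, so their images lie in `im H ⊆ V`, and
`Tr_𝒵 H = 0` gives `Tr_𝒵 P = Tr_𝒵 N`, hence also `Tr P = Tr N`. Scaled by the inverse of this
common trace, `P` and `N` become density operators supported on `V`, so causality gives
`Tr_{𝒴⊗𝒵}(U P U*) = Tr_{𝒴⊗𝒵}(U N U*)`, i.e. `Tr_{𝒴⊗𝒵}(U H U*) = 0`. Finally
`⟨H, U*(X ⊗ 1)U⟩ = Tr(U H U* (X ⊗ 1)) = Tr(Tr_{𝒴⊗𝒵}(U H U*) X)`.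
-/

open Matrix
open scoped Kronecker ComplexOrder

/-- The partial trace over the factor `𝒵` of an operator on `𝒳 ⊗ 𝒴 ⊗ 𝒵`,
represented as a matrix over the index set `(ιX × ιY) × ιZ`. -/
noncomputable def ptraceZ3 {ιX ιY ιZ : Type*} [Fintype ιZ]
    (M : Matrix ((ιX × ιY) × ιZ) ((ιX × ιY) × ιZ) ℂ) :
    Matrix (ιX × ιY) (ιX × ιY) ℂ :=
  Matrix.of fun w w' => ∑ z, M (w, z) (w', z)

/-- The partial trace over the factor `𝒴 ⊗ 𝒵` of an operator on `𝒳 ⊗ 𝒴 ⊗ 𝒵`. -/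
noncomputable def ptraceYZ3 {ιX ιY ιZ : Type*} [Fintype ιY] [Fintype ιZ]
    (M : Matrix ((ιX × ιY) × ιZ) ((ιX × ιY) × ιZ) ℂ) :
    Matrix ιX ιX ℂ :=
  Matrix.of fun x x' => ∑ y, ∑ z, M ((x, y), z) ((x', y), z)

/-- `U` is `𝒴 → 𝒳` causal on the subspace `V ⊆ 𝒳 ⊗ 𝒴 ⊗ 𝒵`: for all density operators
`ρ, σ` supported on `V` with equal partial traces over `𝒵`, the states
`U ρ U*` and `U σ U*` have equal partial traces over `𝒴 ⊗ 𝒵`. -/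
def IsCausalOn {ιX ιY ιZ : Type*} [Fintype ιX] [Fintype ιY] [Fintype ιZ]
    (U : Matrix ((ιX × ιY) × ιZ) ((ιX × ιY) × ιZ) ℂ)
    (V : Submodule ℂ (((ιX × ιY) × ιZ) → ℂ)) : Prop :=
  ∀ ρ σ : Matrix ((ιX × ιY) × ιZ) ((ιX × ιY) × ιZ) ℂ,
    ρ.PosSemidef → ρ.trace = 1 → LinearMap.range ρ.mulVecLin ≤ V →
    σ.PosSemidef → σ.trace = 1 → LinearMap.range σ.mulVecLin ≤ V →
    ptraceZ3 ρ = ptraceZ3 σ →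
    ptraceYZ3 (U * ρ * Uᴴ) = ptraceYZ3 (U * σ * Uᴴ)

namespace Matrix

lemma range_mulVecLin_mul_le {l m n R : Type*} [Fintype m] [Fintype n] [CommSemiring R]
    (A : Matrix l m R) (B : Matrix m n R) :
    LinearMap.range (A * B).mulVecLin ≤ LinearMap.range A.mulVecLin := by
  rw [Matrix.mulVecLin_mul]
  exact LinearMap.range_comp_le_range _ _

lemma range_mulVecLin_smul_le {m n R : Type*} [Fintype n] [CommSemiring R]
    (c : R) (A : Matrix m n R) :
    LinearMap.range (c • A).mulVecLin ≤ LinearMap.range A.mulVecLin := by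
  rintro _ ⟨v, rfl⟩
  exact ⟨c • v, by simp⟩

variable {n 𝕜 : Type*} [Fintype n] [DecidableEq n] [RCLike 𝕜]

lemma IsHermitian.range_cfc_le {A : Matrix n n 𝕜} (hA : A.IsHermitian) {f : ℝ → ℝ}
    (hf : f 0 = 0) : LinearMap.range (cfc f A).mulVecLin ≤ LinearMap.range A.mulVecLin := by
  -- `f = id * (f / id)` everywhere, the junk value `f 0 / 0 = 0` included
  have hfactor : cfc f A = A * cfc (fun x => f x / x) A :=
    calc cfc f A = cfc (fun x => x * (f x / x)) A := cfc_congr fun x _ => by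
          rcases eq_or_ne x 0 with rfl | hx
          · simp [hf]
          · field_simp
      _ = A * cfc (fun x => f x / x) A := by
          rw [cfc_mul _ _ A (by fun_prop) (A.finite_real_spectrum.continuousOn _), cfc_id' ℝ A]
  exact hfactor ▸ range_mulVecLin_mul_le _ _

open scoped MatrixOrder in
lemma IsHermitian.exists_eq_posSemidef_sub_posSemidef {A : Matrix n n 𝕜} (hA : A.IsHermitian) :
    ∃ P N : Matrix n n 𝕜, P.PosSemidef ∧ N.PosSemidef ∧
      LinearMap.range P.mulVecLin ≤ LinearMap.range A.mulVecLin ∧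
      LinearMap.range N.mulVecLin ≤ LinearMap.range A.mulVecLin ∧ A = P - N := by
  refine ⟨cfc (fun x => max x 0) A, cfc (fun x => max (-x) 0) A, ?_, ?_,
    hA.range_cfc_le (by simp), hA.range_cfc_le (by simp), ?_⟩
  · exact (cfc_nonneg fun x _ => le_max_right x 0).posSemidef
  · exact (cfc_nonneg fun x _ => le_max_right (-x) 0).posSemidef
  · rw [← cfc_sub ..]
    exact ((cfc_congr fun x _ => max_zero_sub_max_neg_zero_eq_self x).trans (cfc_id' ℝ A)).symm

end Matrix

section PartialTrace

variable {ιX ιY ιZ : Type*} [Fintype ιZ]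

lemma ptraceZ3_sub (A B : Matrix ((ιX × ιY) × ιZ) ((ιX × ιY) × ιZ) ℂ) :
    ptraceZ3 (A - B) = ptraceZ3 A - ptraceZ3 B := by
  ext; simp [ptraceZ3, Finset.sum_sub_distrib]

lemma ptraceZ3_smul (c : ℂ) (A : Matrix ((ιX × ιY) × ιZ) ((ιX × ιY) × ιZ) ℂ) :
    ptraceZ3 (c • A) = c • ptraceZ3 A := by
  ext; simp [ptraceZ3, Finset.mul_sum]

variable [Fintype ιY]

lemma ptraceYZ3_sub (A B : Matrix ((ιX × ιY) × ιZ) ((ιX × ιY) × ιZ) ℂ) :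
    ptraceYZ3 (A - B) = ptraceYZ3 A - ptraceYZ3 B := by
  ext; simp [ptraceYZ3, Finset.sum_sub_distrib]

lemma ptraceYZ3_smul (c : ℂ) (A : Matrix ((ιX × ιY) × ιZ) ((ιX × ιY) × ιZ) ℂ) :
    ptraceYZ3 (c • A) = c • ptraceYZ3 A := by
  ext; simp [ptraceYZ3, Finset.mul_sum]

variable [Fintype ιX]

lemma trace_ptraceZ3 (A : Matrix ((ιX × ιY) × ιZ) ((ιX × ιY) × ιZ) ℂ) :
    (ptraceZ3 A).trace = A.trace := by
  simp [ptraceZ3, Matrix.trace, Fintype.sum_prod_type]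

lemma trace_mul_kronecker_one_one [DecidableEq ιY] [DecidableEq ιZ]
    (M : Matrix ((ιX × ιY) × ιZ) ((ιX × ιY) × ιZ) ℂ) (X : Matrix ιX ιX ℂ) :
    (M * ((X ⊗ₖ (1 : Matrix ιY ιY ℂ)) ⊗ₖ (1 : Matrix ιZ ιZ ℂ))).trace
      = (ptraceYZ3 M * X).trace := by
  simp only [Matrix.trace, Matrix.diag, Matrix.mul_apply, ptraceYZ3, Matrix.of_apply,
    Fintype.sum_prod_type, Matrix.kroneckerMap_apply, Matrix.one_apply, mul_ite, mul_one,
    mul_zero, Finset.sum_ite_eq', Finset.mem_univ, if_true, Finset.sum_mul]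
  refine Finset.sum_congr rfl fun x _ => ?_
  exact (Finset.sum_congr rfl fun y _ => Finset.sum_comm).trans Finset.sum_comm

end PartialTrace

lemma IsCausalOn.ptraceYZ3_conj_eq {ιX ιY ιZ : Type*} [Fintype ιX] [Fintype ιY] [Fintype ιZ]
    {U : Matrix ((ιX × ιY) × ιZ) ((ιX × ιY) × ιZ) ℂ} {V : Submodule ℂ (((ιX × ιY) × ιZ) → ℂ)}
    (hU : IsCausalOn U V) {P N : Matrix ((ιX × ιY) × ιZ) ((ιX × ιY) × ιZ) ℂ}
    (hP : P.PosSemidef) (hN : N.PosSemidef)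
    (hPV : LinearMap.range P.mulVecLin ≤ V) (hNV : LinearMap.range N.mulVecLin ≤ V)
    (hPN : ptraceZ3 P = ptraceZ3 N) :
    ptraceYZ3 (U * P * Uᴴ) = ptraceYZ3 (U * N * Uᴴ) := by
  have htr : P.trace = N.trace := by rw [← trace_ptraceZ3, hPN, trace_ptraceZ3]
  rcases eq_or_ne P.trace 0 with h0 | h0
  · rw [hP.trace_eq_zero_iff.mp h0, hN.trace_eq_zero_iff.mp (htr ▸ h0)]
  set c := P.trace⁻¹
  have hc : 0 ≤ c := inv_nonneg.mpr hP.trace_nonneg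
  have hcP : (c • P).trace = 1 := by rw [Matrix.trace_smul, smul_eq_mul, inv_mul_cancel₀ h0]
  have hcN : (c • N).trace = 1 := by rw [Matrix.trace_smul, ← htr, ← Matrix.trace_smul, hcP]
  have h := hU (c • P) (c • N) (hP.smul hc) hcP ((Matrix.range_mulVecLin_smul_le c P).trans hPV)
    (hN.smul hc) hcN ((Matrix.range_mulVecLin_smul_le c N).trans hNV)
    (by rw [ptraceZ3_smul, ptraceZ3_smul, hPN])
  simp only [Matrix.mul_smul, Matrix.smul_mul, ptraceYZ3_smul] at h
  exact smul_right_injective _ (inv_ne_zero h0) h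

theorem statement0_general {ιX ιY ιZ : Type*} [Fintype ιX] [Fintype ιY] [Fintype ιZ]
    [DecidableEq ιY] [DecidableEq ιZ]
    (V : Submodule ℂ (((ιX × ιY) × ιZ) → ℂ))
    (U : Matrix ((ιX × ιY) × ιZ) ((ιX × ιY) × ιZ) ℂ)
    (hUcausal : IsCausalOn U V)
    (H : Matrix ((ιX × ιY) × ιZ) ((ιX × ιY) × ιZ) ℂ)
    (hH : H.IsHermitian)
    (hHim : LinearMap.range H.mulVecLin ≤ V)
    (hHtr : ptraceZ3 H = 0)
    (X : Matrix ιX ιX ℂ) :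
    (Hᴴ * (Uᴴ * ((X ⊗ₖ (1 : Matrix ιY ιY ℂ)) ⊗ₖ (1 : Matrix ιZ ιZ ℂ)) * U)).trace = 0 := by
  classical
  obtain ⟨P, N, hP, hN, hPH, hNH, rfl⟩ := hH.exists_eq_posSemidef_sub_posSemidef
  have hPN : ptraceZ3 P = ptraceZ3 N := sub_eq_zero.mp (ptraceZ3_sub P N ▸ hHtr)
  have hcausal := hUcausal.ptraceYZ3_conj_eq hP hN (hPH.trans hHim) (hNH.trans hHim) hPN
  set K := (X ⊗ₖ (1 : Matrix ιY ιY ℂ)) ⊗ₖ (1 : Matrix ιZ ιZ ℂ)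
  calc ((P - N)ᴴ * (Uᴴ * K * U)).trace = (U * (P - N) * Uᴴ * K).trace := by
        simp only [hH.eq, Matrix.mul_assoc]
        rw [Matrix.trace_mul_comm U]
        simp only [Matrix.mul_assoc]
    _ = (ptraceYZ3 (U * (P - N) * Uᴴ) * X).trace := trace_mul_kronecker_one_one _ X
    _ = 0 := by
        rw [Matrix.mul_sub, Matrix.sub_mul, ptraceYZ3_sub, hcausal, sub_self, Matrix.zero_mul,
          Matrix.trace_zero]

/-- If `U` is a unitary on `𝒳 ⊗ 𝒴 ⊗ 𝒵` that is `𝒴 → 𝒳` causal on a subspace `V`, then for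
every Hermitian `H` with `im(H) ⊆ V` and `Tr_𝒵(H) = 0` and every operator `X` on `𝒳`,
the Hilbert–Schmidt inner product `⟨H, U*(X ⊗ 1)U⟩ = Tr(H* U*(X ⊗ 1)U)` vanishes. -/
theorem statement0 {ιX ιY ιZ : Type*} [Fintype ιX] [Fintype ιY] [Fintype ιZ]
    [DecidableEq ιX] [DecidableEq ιY] [DecidableEq ιZ]
    (V : Submodule ℂ (((ιX × ιY) × ιZ) → ℂ))
    (U : Matrix ((ιX × ιY) × ιZ) ((ιX × ιY) × ιZ) ℂ)
    (hU : U ∈ Matrix.unitaryGroup ((ιX × ιY) × ιZ) ℂ)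
    (hUcausal : IsCausalOn U V)
    (H : Matrix ((ιX × ιY) × ιZ) ((ιX × ιY) × ιZ) ℂ)
    (hH : H.IsHermitian)
    (hHim : LinearMap.range H.mulVecLin ≤ V)
    (hHtr : ptraceZ3 H = 0)
    (X : Matrix ιX ιX ℂ) :
    (Hᴴ * (Uᴴ * ((X ⊗ₖ (1 : Matrix ιY ιY ℂ)) ⊗ₖ (1 : Matrix ιZ ιZ ℂ)) * U)).trace = 0 :=
  statement0_general V U hUcausal H hH hHim hHtr X
end

section
/- Let 𝒲 and 𝒵 be finite-dimensional complex Hilbert spaces, let {Δ_1,…,Δ_n} be an orthogonal set of nonzero projection operators on 𝒲, let {Λ_1,…,Λ_n} be an orthogonal set of nonzero projection operators on 𝒵, and let Π = Σ_{k=1}^n Δ_k⊗Λ_k. Let A be a linear operator on 𝒲⊗𝒵 such that ⟨H, A⟩ = 0 for every Hermitian operator H on 𝒲⊗𝒵 with im(H) ⊆ im(Π) and Tr_𝒵(H) = 0. Then there exists a linear operator W on 𝒲 such that ΠAΠ = Π(W⊗1_𝒵)Π. -/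
/-!
The compressions `Π (W ⊗ 1) Π` form a subspace `U` of operators, so it suffices to show that
`Π A Π` is orthogonal to `U^⊥` for the Hilbert–Schmidt inner product. If `X ⊥ U`, then
`H = Π X Π` has `Tr_𝒵 H = 0`, because `⟨Π (W ⊗ 1) Π, X⟩ = ⟨W ⊗ 1, H⟩ = ⟨W, Tr_𝒵 H⟩`; its real
and imaginary parts are Hermitian operators of the kind the hypothesis on `A` is about, hence
`⟨X, Π A Π⟩ = ⟨H, A⟩ = 0`.
-/

open Matrix
open scoped Kronecker ComplexOrder

/-- The partial trace over the factor `𝒵` of an operator on `𝒲 ⊗ 𝒵`. -/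
noncomputable def ptraceZ2 {ιW ιZ : Type*} [Fintype ιZ]
    (M : Matrix (ιW × ιZ) (ιW × ιZ) ℂ) : Matrix ιW ιW ℂ :=
  Matrix.of fun w w' => ∑ z, M (w, z) (w', z)

open scoped InnerProductSpace ComplexStarModule

namespace Matrix

variable {ι : Type*} [Fintype ι]

noncomputable def toEuclideanSpace : Matrix ι ι ℂ ≃ₗ[ℂ] EuclideanSpace ℂ (ι × ι) :=
  (LinearEquiv.curry ℂ ℂ ι ι).symm.trans (WithLp.linearEquiv 2 ℂ _).symm

theorem inner_toEuclideanSpace (X Y : Matrix ι ι ℂ) :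
    ⟪toEuclideanSpace X, toEuclideanSpace Y⟫_ℂ = (Xᴴ * Y).trace := by
  simp only [toEuclideanSpace, PiLp.inner_apply, RCLike.inner_apply, trace, diag,
    mul_apply, conjTranspose_apply]
  rw [Fintype.sum_prod_type, Finset.sum_comm]
  exact Finset.sum_congr rfl fun _ _ => Finset.sum_congr rfl fun _ _ => mul_comm _ _

theorem mem_of_forall_trace_conjTranspose_mul_eq_zero {U : Submodule ℂ (Matrix ι ι ℂ)}
    {Y : Matrix ι ι ℂ}
    (h : ∀ X, (∀ Z ∈ U, (Zᴴ * X).trace = 0) → (Xᴴ * Y).trace = 0) : Y ∈ U := by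
  let e := (toEuclideanSpace : Matrix ι ι ℂ ≃ₗ[ℂ] _)
  suffices e Y ∈ U.map (e : Matrix ι ι ℂ →ₗ[ℂ] _) by simpa using this
  rw [← Submodule.orthogonal_orthogonal (U.map _), Submodule.mem_orthogonal]
  intro x hx
  rw [← e.apply_symm_apply x, inner_toEuclideanSpace]
  refine h _ fun Z hZ => ?_
  rw [← inner_toEuclideanSpace, e.apply_symm_apply]
  exact (Submodule.mem_orthogonal _ _).1 hx _ (Submodule.mem_map_of_mem hZ)

theorem trace_conjTranspose_mul_eq_zero_of_isHermitian {S : Submodule ℂ (Matrix ι ι ℂ)}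
    (hS : ∀ H ∈ S, Hᴴ ∈ S) {A : Matrix ι ι ℂ}
    (hA : ∀ H ∈ S, H.IsHermitian → (Hᴴ * A).trace = 0) {H : Matrix ι ι ℂ} (hH : H ∈ S) :
    (Hᴴ * A).trace = 0 := by
  have hre : (ℜ H : Matrix ι ι ℂ) ∈ S := by
    rw [realPart_apply_coe]
    exact S.smul_of_tower_mem _ (S.add_mem hH (hS H hH))
  have him : (ℑ H : Matrix ι ι ℂ) ∈ S := by
    rw [imaginaryPart_apply_coe]
    exact S.smul_mem _ (S.smul_of_tower_mem _ (S.sub_mem hH (hS H hH)))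
  rw [← realPart_add_I_smul_imaginaryPart H, conjTranspose_add, conjTranspose_smul, add_mul,
    trace_add, smul_mul, trace_smul, hA _ hre (ℜ H).2, hA _ him (ℑ H).2, smul_zero, add_zero]

theorem trace_conjTranspose_mul_mul_mul {P : Matrix ι ι ℂ} (hP : P.IsHermitian)
    (X Y : Matrix ι ι ℂ) : ((P * X * P)ᴴ * Y).trace = (Xᴴ * (P * Y * P)).trace := by
  rw [conjTranspose_mul, conjTranspose_mul, hP.eq, Matrix.mul_assoc, Matrix.mul_assoc,
    trace_mul_comm]
  simp only [Matrix.mul_assoc]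

theorem IsHermitian.kronecker {m n : Type*} {A : Matrix m m ℂ} {B : Matrix n n ℂ}
    (hA : A.IsHermitian) (hB : B.IsHermitian) : (A ⊗ₖ B).IsHermitian := by
  rw [IsHermitian, conjTranspose_kronecker, hA.eq, hB.eq]

end Matrix

section PartialTrace

variable {ιW ιZ : Type*} [Fintype ιZ]

noncomputable def ptraceZ2LinearMap : Matrix (ιW × ιZ) (ιW × ιZ) ℂ →ₗ[ℂ] Matrix ιW ιW ℂ where
  toFun := ptraceZ2
  map_add' M N := by ext; simp [ptraceZ2, Finset.sum_add_distrib]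
  map_smul' c M := by ext; simp [ptraceZ2, Finset.mul_sum]

theorem ptraceZ2LinearMap_apply (M : Matrix (ιW × ιZ) (ιW × ιZ) ℂ) :
    ptraceZ2LinearMap M = ptraceZ2 M :=
  rfl

theorem ptraceZ2_conjTranspose (M : Matrix (ιW × ιZ) (ιW × ιZ) ℂ) :
    ptraceZ2 Mᴴ = (ptraceZ2 M)ᴴ := by
  ext; simp [ptraceZ2]

theorem trace_kronecker_one_mul [Fintype ιW] [DecidableEq ιZ] (V : Matrix ιW ιW ℂ)
    (H : Matrix (ιW × ιZ) (ιW × ιZ) ℂ) :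
    ((V ⊗ₖ (1 : Matrix ιZ ιZ ℂ)) * H).trace = (V * ptraceZ2 H).trace := by
  simp only [trace, diag, mul_apply, ptraceZ2, of_apply, kronecker_apply, one_apply,
    Fintype.sum_prod_type, Finset.mul_sum, mul_ite, mul_one, mul_zero, ite_mul, zero_mul,
    Finset.sum_ite_eq, Finset.mem_univ, if_true]
  exact Finset.sum_congr rfl fun _ _ => Finset.sum_comm

end PartialTrace

theorem exists_mul_kronecker_one_mul_eq {ιW ιZ : Type*} [Fintype ιW] [Fintype ιZ]
    [DecidableEq ιZ] {P A : Matrix (ιW × ιZ) (ιW × ιZ) ℂ} (hP : P.IsHermitian)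
    (hA : ∀ H : Matrix (ιW × ιZ) (ιW × ιZ) ℂ, H.IsHermitian →
      LinearMap.range H.mulVecLin ≤ LinearMap.range P.mulVecLin →
      ptraceZ2 H = 0 → (Hᴴ * A).trace = 0) :
    ∃ W : Matrix ιW ιW ℂ, P * A * P = P * (W ⊗ₖ (1 : Matrix ιZ ιZ ℂ)) * P := by
  let C := LinearMap.mulLeftRight ℂ (P, P)
  let S := LinearMap.range C ⊓ LinearMap.ker ptraceZ2LinearMap
  have hS : ∀ H ∈ S, Hᴴ ∈ S := by
    rintro _ ⟨⟨X, rfl⟩, hX⟩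
    refine ⟨⟨Xᴴ, ?_⟩, ?_⟩
    · simp [C, LinearMap.mulLeftRight_apply, conjTranspose_mul, hP.eq, Matrix.mul_assoc]
    · simp_all [ptraceZ2LinearMap_apply, ptraceZ2_conjTranspose]
  have hAS : ∀ H ∈ S, H.IsHermitian → (Hᴴ * A).trace = 0 := by
    rintro _ ⟨⟨X, rfl⟩, hX⟩ hH
    refine hA _ hH ?_ hX
    rw [LinearMap.mulLeftRight_apply, Matrix.mul_assoc, mulVecLin_mul]
    exact LinearMap.range_comp_le_range _ _
  have hPAP : P * A * P ∈ (LinearMap.range ((kroneckerBilinear (R := ℂ) (α := ℂ)).flip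
      (1 : Matrix ιZ ιZ ℂ))).map C := by
    refine mem_of_forall_trace_conjTranspose_mul_eq_zero fun X hX => ?_
    have hXS : P * X * P ∈ S := by
      refine ⟨⟨X, rfl⟩, ?_⟩
      change ptraceZ2 (P * X * P) = 0
      refine ext_iff_trace_mul_left.2 fun V => ?_
      rw [Matrix.mul_zero, trace_zero, ← trace_kronecker_one_mul,
        ← conjTranspose_conjTranspose V, ← conjTranspose_one, ← conjTranspose_kronecker,
        ← trace_conjTranspose_mul_mul_mul hP]
      exact hX _ ⟨_, ⟨Vᴴ, rfl⟩, rfl⟩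
    rw [← trace_conjTranspose_mul_mul_mul hP]
    exact trace_conjTranspose_mul_eq_zero_of_isHermitian hS hAS hXS
  obtain ⟨_, ⟨W, rfl⟩, hW⟩ := hPAP
  exact ⟨W, hW.symm⟩

theorem statement1_general {ιW ιZ : Type*} [Fintype ιW] [Fintype ιZ] [DecidableEq ιZ]
    (n : ℕ) (Δ : Fin n → Matrix ιW ιW ℂ) (Λ : Fin n → Matrix ιZ ιZ ℂ)
    (hΔproj : ∀ k, (Δ k).IsHermitian ∧ Δ k * Δ k = Δ k)
    (hΛproj : ∀ k, (Λ k).IsHermitian ∧ Λ k * Λ k = Λ k)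
    (A : Matrix (ιW × ιZ) (ιW × ιZ) ℂ)
    (hA : ∀ H : Matrix (ιW × ιZ) (ιW × ιZ) ℂ, H.IsHermitian →
      LinearMap.range H.mulVecLin ≤ LinearMap.range (∑ k, Δ k ⊗ₖ Λ k).mulVecLin →
      ptraceZ2 H = 0 → (Hᴴ * A).trace = 0) :
    ∃ W : Matrix ιW ιW ℂ,
      (∑ k, Δ k ⊗ₖ Λ k) * A * (∑ k, Δ k ⊗ₖ Λ k) =
      (∑ k, Δ k ⊗ₖ Λ k) * (W ⊗ₖ (1 : Matrix ιZ ιZ ℂ)) * (∑ k, Δ k ⊗ₖ Λ k) :=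
  exists_mul_kronecker_one_mul_eq
    (isSelfAdjoint_sum _ fun k _ => (hΔproj k).1.kronecker (hΛproj k).1) hA

/-- Given orthogonal families of nonzero (Hermitian, idempotent) projections
`Δ_k` on `𝒲` and `Λ_k` on `𝒵`, set `Π = Σ_k Δ_k ⊗ Λ_k`.  If `A` is an operator on `𝒲 ⊗ 𝒵`
such that `⟨H, A⟩ = 0` for every Hermitian `H` with `im(H) ⊆ im(Π)` and `Tr_𝒵(H) = 0`,
then `Π A Π = Π (W ⊗ 1) Π` for some operator `W` on `𝒲`. -/
theorem statement1 {ιW ιZ : Type*} [Fintype ιW] [Fintype ιZ] [DecidableEq ιW] [DecidableEq ιZ]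
    (n : ℕ) (Δ : Fin n → Matrix ιW ιW ℂ) (Λ : Fin n → Matrix ιZ ιZ ℂ)
    (hΔproj : ∀ k, (Δ k).IsHermitian ∧ Δ k * Δ k = Δ k)
    (hΔne : ∀ k, Δ k ≠ 0)
    (hΔorth : ∀ j k, j ≠ k → Δ j * Δ k = 0)
    (hΛproj : ∀ k, (Λ k).IsHermitian ∧ Λ k * Λ k = Λ k)
    (hΛne : ∀ k, Λ k ≠ 0)
    (hΛorth : ∀ j k, j ≠ k → Λ j * Λ k = 0)
    (A : Matrix (ιW × ιZ) (ιW × ιZ) ℂ)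
    (hA : ∀ H : Matrix (ιW × ιZ) (ιW × ιZ) ℂ, H.IsHermitian →
      LinearMap.range H.mulVecLin ≤ LinearMap.range (∑ k, Δ k ⊗ₖ Λ k).mulVecLin →
      ptraceZ2 H = 0 → (Hᴴ * A).trace = 0) :
    ∃ W : Matrix ιW ιW ℂ,
      (∑ k, Δ k ⊗ₖ Λ k) * A * (∑ k, Δ k ⊗ₖ Λ k) =
      (∑ k, Δ k ⊗ₖ Λ k) * (W ⊗ₖ (1 : Matrix ιZ ιZ ℂ)) * (∑ k, Δ k ⊗ₖ Λ k) :=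
  statement1_general n Δ Λ hΔproj hΛproj A hA
end

section
/- Let 𝒳, 𝒴, 𝒵 be finite-dimensional complex Hilbert spaces, let {Δ_1,…,Δ_n} be an orthogonal set of nonzero projection operators on 𝒳⊗𝒴, let {Λ_1,…,Λ_n} be an orthogonal set of nonzero projection operators on 𝒵, let Π = Σ_{k=1}^n Δ_k⊗Λ_k, and let U be a unitary operator on 𝒳⊗𝒴⊗𝒵 that is 𝒴→𝒳 causal on im(Π). Then for every linear operator X on 𝒳 there exists a linear operator W on 𝒳⊗𝒴 such that Π U*(X⊗1_{𝒴⊗𝒵})U Π = Π(W⊗1_𝒵)Π. -/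
/-!
Write `Π = ∑ₖ Δₖ ⊗ Λₖ` and `A = U* (X ⊗ 1 ⊗ 1) U`. For a state `ρ` supported on `im Π`, let `σ` be
obtained by replacing, inside each block `Δₖ ⊗ Λₖ`, the `𝒵`-part of `ρ` with the normalised
projection `Λₖ / tr Λₖ`. Since the `Λₖ` are orthogonal, `Tr_𝒵 ρ = Tr_𝒵 (Π ρ Π)` only sees the
diagonal blocks, so `Tr_𝒵 σ = Tr_𝒵 ρ`; and `σ` is again a state on `im Π`. Causality thus gives
`tr (A ρ) = tr (A σ)`. The adjoint of `ρ ↦ σ`, compressed by `Π`, sends `A` to `Π (W ⊗ 1) Π` with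
`W = ∑ₖ (tr Λₖ)⁻¹ Δₖ Tr_𝒵 (A (1 ⊗ Λₖ)) Δₖ` (here the orthogonality of the `Δₖ` enters), so
`tr (A ρ) = tr ((W ⊗ 1) ρ)` for every state on `im Π`. Testing this on pure states and polarizing
gives `Π A Π = Π (W ⊗ 1) Π`.
-/

open Matrix
open scoped Kronecker ComplexOrder

namespace Matrix

variable {α β R : Type*} [Fintype β]

def partialTraceRight [AddCommMonoid R] (M : Matrix (α × β) (α × β) R) : Matrix α α R :=
  of fun a a' => ∑ b, M (a, b) (a', b)

theorem partialTraceRight_eq_sum_submatrix [AddCommMonoid R] (M : Matrix (α × β) (α × β) R) :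
    partialTraceRight M = ∑ b, M.submatrix (·, b) (·, b) := by
  ext a a'
  simp [partialTraceRight, sum_apply]

theorem PosSemidef.partialTraceRight [Ring R] [PartialOrder R] [StarRing R] [AddLeftMono R]
    {M : Matrix (α × β) (α × β) R} (hM : M.PosSemidef) : (partialTraceRight M).PosSemidef := by
  rw [partialTraceRight_eq_sum_submatrix]
  exact posSemidef_sum _ fun b _ => hM.submatrix _

section CommSemiring

variable [CommSemiring R]

@[simp]
theorem partialTraceRight_zero : partialTraceRight (0 : Matrix (α × β) (α × β) R) = 0 := by
  ext a a'
  simp [partialTraceRight]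

theorem partialTraceRight_smul (c : R) (M : Matrix (α × β) (α × β) R) :
    partialTraceRight (c • M) = c • partialTraceRight M := by
  ext a a'
  simp [partialTraceRight, Finset.mul_sum]

theorem partialTraceRight_sum {ι : Type*} (s : Finset ι) (M : ι → Matrix (α × β) (α × β) R) :
    partialTraceRight (∑ i ∈ s, M i) = ∑ i ∈ s, partialTraceRight (M i) := by
  ext a a'
  simp only [partialTraceRight, of_apply, sum_apply]
  exact Finset.sum_comm

variable [Fintype α] [DecidableEq β]

theorem trace_mul_kronecker_one (M : Matrix (α × β) (α × β) R) (S : Matrix α α R) :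
    trace (M * (S ⊗ₖ (1 : Matrix β β R))) = trace (partialTraceRight M * S) := by
  simp only [trace, diag, mul_apply, kroneckerMap_apply, one_apply, partialTraceRight, of_apply,
    Fintype.sum_prod_type, mul_ite, mul_one, mul_zero, Finset.sum_mul]
  simp only [Finset.sum_ite_eq', Finset.mem_univ, if_true]
  exact Finset.sum_congr rfl fun _ _ => Finset.sum_comm

theorem partialTraceRight_eq_of_trace_mul_kronecker_one {M N : Matrix (α × β) (α × β) R}
    (h : ∀ S : Matrix α α R, trace (M * (S ⊗ₖ 1)) = trace (N * (S ⊗ₖ 1))) :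
    partialTraceRight M = partialTraceRight N :=
  ext_iff_trace_mul_right.2 fun S => by
    rw [← trace_mul_kronecker_one, ← trace_mul_kronecker_one, h]

theorem trace_partialTraceRight [DecidableEq α] (M : Matrix (α × β) (α × β) R) :
    trace (partialTraceRight M) = trace M := by
  simpa [one_kronecker_one] using (trace_mul_kronecker_one M 1).symm

theorem partialTraceRight_kronecker (S : Matrix α α R) (T : Matrix β β R) :
    partialTraceRight (S ⊗ₖ T) = trace T • S :=
  ext_iff_trace_mul_right.2 fun S' => by
    rw [← trace_mul_kronecker_one, ← mul_kronecker_mul, mul_one, trace_kronecker, smul_mul,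
      trace_smul, smul_eq_mul, mul_comm]

theorem partialTraceRight_kronecker_one_mul_mul (A C : Matrix α α R)
    (M : Matrix (α × β) (α × β) R) :
    partialTraceRight ((A ⊗ₖ 1) * M * (C ⊗ₖ 1)) = A * partialTraceRight M * C := by
  refine ext_iff_trace_mul_right.2 fun S => ?_
  have hCSA : (C * S * A) ⊗ₖ (1 : Matrix β β R) = (C ⊗ₖ 1) * ((S ⊗ₖ 1) * (A ⊗ₖ 1)) := by
    simp only [← mul_kronecker_mul, mul_one, mul_assoc]
  calc trace (partialTraceRight ((A ⊗ₖ 1) * M * (C ⊗ₖ 1)) * S)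
      = trace ((A ⊗ₖ 1) * (M * ((C ⊗ₖ 1) * (S ⊗ₖ 1)))) := by
        rw [← trace_mul_kronecker_one]; simp only [mul_assoc]
    _ = trace (M * ((C * S * A) ⊗ₖ 1)) := by
        rw [trace_mul_comm, hCSA]; simp only [mul_assoc]
    _ = trace (A * partialTraceRight M * C * S) := by
        rw [trace_mul_kronecker_one, ← mul_assoc, trace_mul_comm]; simp only [mul_assoc]

theorem partialTraceRight_one_kronecker_mul [DecidableEq α] (B : Matrix β β R)
    (M : Matrix (α × β) (α × β) R) :
    partialTraceRight ((1 ⊗ₖ B) * M) = partialTraceRight (M * (1 ⊗ₖ B)) := by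
  refine partialTraceRight_eq_of_trace_mul_kronecker_one fun S => ?_
  have hcomm : (1 ⊗ₖ B) * (S ⊗ₖ 1) = (S ⊗ₖ 1) * (1 ⊗ₖ B) := by
    simp only [← mul_kronecker_mul, mul_one, one_mul]
  rw [trace_mul_cycle, trace_mul_comm, ← hcomm, ← mul_assoc]

theorem partialTraceRight_kronecker_mul_mul_kronecker [DecidableEq α] (A C : Matrix α α R)
    (B D : Matrix β β R) (M : Matrix (α × β) (α × β) R) :
    partialTraceRight ((A ⊗ₖ B) * M * (C ⊗ₖ D)) =
      A * partialTraceRight (M * (1 ⊗ₖ (D * B))) * C := by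
  have hAB : A ⊗ₖ B = (A ⊗ₖ 1) * (1 ⊗ₖ B) := by rw [← mul_kronecker_mul, mul_one, one_mul]
  have hCD : C ⊗ₖ D = (1 ⊗ₖ D) * (C ⊗ₖ 1) := by rw [← mul_kronecker_mul, mul_one, one_mul]
  rw [hAB, hCD, show (A ⊗ₖ 1) * (1 ⊗ₖ B) * M * ((1 ⊗ₖ D) * (C ⊗ₖ 1)) =
      (A ⊗ₖ 1) * ((1 ⊗ₖ B) * (M * (1 ⊗ₖ D))) * (C ⊗ₖ 1) by simp only [mul_assoc],
    partialTraceRight_kronecker_one_mul_mul, partialTraceRight_one_kronecker_mul, mul_assoc M,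
    ← mul_kronecker_mul, one_mul]

theorem trace_mul_kronecker [DecidableEq α] (M : Matrix (α × β) (α × β) R) (S : Matrix α α R)
    (T : Matrix β β R) :
    trace (M * (S ⊗ₖ T)) = trace (partialTraceRight (M * (1 ⊗ₖ T)) * S) := by
  rw [← trace_mul_kronecker_one, mul_assoc, ← mul_kronecker_mul, one_mul, mul_one]

theorem trace_kronecker_one_kronecker_one_mul {γ : Type*} [Fintype γ] [DecidableEq γ]
    (X : Matrix α α R) (N : Matrix ((α × γ) × β) ((α × γ) × β) R) :
    trace (((X ⊗ₖ (1 : Matrix γ γ R)) ⊗ₖ (1 : Matrix β β R)) * N) =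
      trace (X * partialTraceRight (partialTraceRight N)) := by
  rw [trace_mul_comm, trace_mul_kronecker_one, trace_mul_kronecker_one, trace_mul_comm]

end CommSemiring

variable {n : Type*} [Fintype n]

theorem IsHermitian.posSemidef_of_mul_self_eq {R : Type*} [Ring R] [PartialOrder R] [StarRing R]
    [StarOrderedRing R] {A : Matrix n n R} (hA : A.IsHermitian) (h : A * A = A) :
    A.PosSemidef := by
  simpa [hA.eq, h] using posSemidef_conjTranspose_mul_self A

theorem mul_eq_self_of_range_le {R : Type*} [CommSemiring R] {P ρ : Matrix n n R}
    (hP : P * P = P) (hρ : LinearMap.range ρ.mulVecLin ≤ LinearMap.range P.mulVecLin) :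
    P * ρ = ρ := by
  refine ext_iff_mulVec.2 fun v => ?_
  obtain ⟨u, hu⟩ := hρ (LinearMap.mem_range_self _ v)
  rw [mulVecLin_apply, mulVecLin_apply] at hu
  rw [← mulVec_mulVec, ← hu, mulVec_mulVec, hP]

theorem range_mulVecLin_le_of_mul_eq {R : Type*} [CommSemiring R] {P ρ : Matrix n n R}
    (h : P * ρ = ρ) : LinearMap.range ρ.mulVecLin ≤ LinearMap.range P.mulVecLin := by
  rw [← h, mulVecLin_mul]
  exact LinearMap.range_comp_le_range _ _

variable [DecidableEq n]

theorem eq_zero_of_forall_star_dotProduct_mulVec_eq_zero {M : Matrix n n ℂ}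
    (h : ∀ x, star x ⬝ᵥ (M *ᵥ x) = 0) : M = 0 := by
  have := (inner_map_self_eq_zero (toEuclideanLin M)).1 fun x => by
    rw [EuclideanSpace.inner_eq_star_dotProduct, toLpLin_apply, dotProduct_star, dotProduct_comm,
      h, star_zero]
  simpa using this

theorem conj_eq_zero_of_forall_trace_mul_eq_zero {P M : Matrix n n ℂ} (hPh : P.IsHermitian)
    (hP : P * P = P)
    (h : ∀ ρ : Matrix n n ℂ, ρ.PosSemidef → ρ.trace = 1 →
      LinearMap.range ρ.mulVecLin ≤ LinearMap.range P.mulVecLin → trace (M * ρ) = 0) :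
    P * M * P = 0 := by
  refine eq_zero_of_forall_star_dotProduct_mulVec_eq_zero fun x => ?_
  set w := P *ᵥ x
  have hw : star x ⬝ᵥ ((P * M * P) *ᵥ x) = star w ⬝ᵥ (M *ᵥ w) := by
    simp only [w, ← mulVec_mulVec, dotProduct_mulVec, star_mulVec, hPh.eq]
  rw [hw]
  rcases eq_or_ne w 0 with hw0 | hw0
  · simp [hw0]
  set c := star w ⬝ᵥ w
  have hc : c ≠ 0 := dotProduct_star_self_eq_zero.not.2 hw0
  set ρ := c⁻¹ • vecMulVec w (star w)
  have hPρ : P * ρ = ρ := by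
    rw [Matrix.mul_smul, mul_vecMulVec, mulVec_mulVec, hP]
  have hρ : ρ.PosSemidef :=
    (posSemidef_vecMulVec_self_star w).smul (inv_nonneg.2 (dotProduct_star_self_nonneg w))
  have hρtr : ρ.trace = 1 := by
    rw [trace_smul, trace_vecMulVec, dotProduct_comm, smul_eq_mul, inv_mul_cancel₀ hc]
  have hMρ := h ρ hρ hρtr (range_mulVecLin_le_of_mul_eq hPρ)
  rw [Matrix.mul_smul, trace_smul, mul_vecMulVec, trace_vecMulVec, smul_eq_mul,
    dotProduct_comm] at hMρ
  exact (mul_eq_zero.1 hMρ).resolve_left (inv_ne_zero hc)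

end Matrix

theorem ptraceZ3_eq {ιX ιY ιZ : Type*} [Fintype ιZ]
    (M : Matrix ((ιX × ιY) × ιZ) ((ιX × ιY) × ιZ) ℂ) : ptraceZ3 M = partialTraceRight M :=
  rfl

theorem ptraceYZ3_eq {ιX ιY ιZ : Type*} [Fintype ιY] [Fintype ιZ]
    (M : Matrix ((ιX × ιY) × ιZ) ((ιX × ιY) × ιZ) ℂ) :
    ptraceYZ3 M = partialTraceRight (partialTraceRight M) :=
  rfl

section KroneckerSum

variable {ι α β R : Type*} [Fintype ι] [CommSemiring R]

def kroneckerSum (Δ : ι → Matrix α α R) (Λ : ι → Matrix β β R) :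
    Matrix (α × β) (α × β) R :=
  ∑ k, Δ k ⊗ₖ Λ k

variable {Δ : ι → Matrix α α R} {Λ : ι → Matrix β β R}

theorem isHermitian_kroneckerSum [StarRing R] (hΔ : ∀ k, (Δ k).IsHermitian)
    (hΛ : ∀ k, (Λ k).IsHermitian) : (kroneckerSum Δ Λ).IsHermitian := by
  simp only [IsHermitian, kroneckerSum, conjTranspose_sum, conjTranspose_kronecker, (hΔ _).eq,
    (hΛ _).eq]

variable [Fintype α] [Fintype β]

theorem kroneckerSum_mul_kronecker (hΛ : ∀ k, Λ k * Λ k = Λ k)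
    (hΛorth : ∀ j k, j ≠ k → Λ j * Λ k = 0) {k : ι} {S : Matrix α α R} (hS : Δ k * S = S) :
    kroneckerSum Δ Λ * (S ⊗ₖ Λ k) = S ⊗ₖ Λ k := by
  rw [kroneckerSum, Finset.sum_mul, Finset.sum_eq_single_of_mem k (Finset.mem_univ k)
    fun j _ hj => by rw [← mul_kronecker_mul, hΛorth j k hj, kronecker_zero],
    ← mul_kronecker_mul, hS, hΛ]

theorem kroneckerSum_mul_self (hΔ : ∀ k, Δ k * Δ k = Δ k) (hΛ : ∀ k, Λ k * Λ k = Λ k)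
    (hΛorth : ∀ j k, j ≠ k → Λ j * Λ k = 0) :
    kroneckerSum Δ Λ * kroneckerSum Δ Λ = kroneckerSum Δ Λ := by
  conv_lhs => rw [kroneckerSum, Finset.mul_sum]
  exact Finset.sum_congr rfl fun k _ => kroneckerSum_mul_kronecker hΛ hΛorth (hΔ k)

theorem kroneckerSum_mul_kronecker_one_mul_kroneckerSum [DecidableEq β]
    (hΛ : ∀ k, Λ k * Λ k = Λ k) (hΛorth : ∀ j k, j ≠ k → Λ j * Λ k = 0) (E : Matrix α α R) :
    kroneckerSum Δ Λ * (E ⊗ₖ 1) * kroneckerSum Δ Λ = ∑ k, (Δ k * E * Δ k) ⊗ₖ Λ k := by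
  simp only [kroneckerSum, Finset.sum_mul, Finset.mul_sum, ← mul_kronecker_mul, mul_one]
  refine Finset.sum_congr rfl fun j _ => ?_
  rw [Finset.sum_eq_single_of_mem j (Finset.mem_univ j)
    fun k _ hk => by rw [hΛorth k j hk, kronecker_zero], hΛ]

theorem partialTraceRight_kroneckerSum_mul_mul_kroneckerSum [DecidableEq α] [DecidableEq β]
    (hΛ : ∀ k, Λ k * Λ k = Λ k) (hΛorth : ∀ j k, j ≠ k → Λ j * Λ k = 0)
    (ρ : Matrix (α × β) (α × β) R) :
    partialTraceRight (kroneckerSum Δ Λ * ρ * kroneckerSum Δ Λ) =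
      ∑ k, Δ k * partialTraceRight (ρ * (1 ⊗ₖ Λ k)) * Δ k := by
  simp only [kroneckerSum, Finset.sum_mul, Finset.mul_sum, partialTraceRight_sum,
    partialTraceRight_kronecker_mul_mul_kronecker]
  refine Finset.sum_congr rfl fun j _ => ?_
  rw [Finset.sum_eq_single_of_mem j (Finset.mem_univ j)
    fun k _ hk => by rw [hΛorth j k hk.symm, kronecker_zero, mul_zero, partialTraceRight_zero,
      mul_zero, zero_mul], hΛ]

end KroneckerSum

section BlockDepolarize

variable {ι α β : Type*} [Fintype ι] [Fintype α] [Fintype β]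
  {Δ : ι → Matrix α α ℂ} {Λ : ι → Matrix β β ℂ}

noncomputable def blockDepolarize (Δ : ι → Matrix α α ℂ) (Λ : ι → Matrix β β ℂ)
    (ρ : Matrix (α × β) (α × β) ℂ) : Matrix (α × β) (α × β) ℂ :=
  ∑ k, (trace (Λ k))⁻¹ • (partialTraceRight ((Δ k ⊗ₖ Λ k) * ρ * (Δ k ⊗ₖ Λ k)) ⊗ₖ Λ k)

theorem Matrix.PosSemidef.blockDepolarize (hΔ : ∀ k, (Δ k).IsHermitian)
    (hΛ : ∀ k, (Λ k).PosSemidef) {ρ : Matrix (α × β) (α × β) ℂ} (hρ : ρ.PosSemidef) :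
    (blockDepolarize Δ Λ ρ).PosSemidef := by
  refine posSemidef_sum _ fun k _ => ?_
  have hconj := hρ.mul_mul_conjTranspose_same (Δ k ⊗ₖ Λ k)
  rw [conjTranspose_kronecker, (hΔ k).eq, (hΛ k).isHermitian.eq] at hconj
  exact (hconj.partialTraceRight.kronecker (hΛ k)).smul (inv_nonneg.2 (hΛ k).trace_nonneg)

variable [DecidableEq α]

noncomputable def blockDepolarizeDual (Δ : ι → Matrix α α ℂ) (Λ : ι → Matrix β β ℂ)
    (A : Matrix (α × β) (α × β) ℂ) : Matrix α α ℂ :=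
  ∑ k, (trace (Λ k))⁻¹ • (Δ k * partialTraceRight (A * (1 ⊗ₖ Λ k)) * Δ k)

theorem mul_blockDepolarizeDual_mul (hΔ : ∀ k, Δ k * Δ k = Δ k)
    (hΔorth : ∀ j k, j ≠ k → Δ j * Δ k = 0) (A : Matrix (α × β) (α × β) ℂ) (j : ι) :
    Δ j * blockDepolarizeDual Δ Λ A * Δ j =
      (trace (Λ j))⁻¹ • (Δ j * partialTraceRight (A * (1 ⊗ₖ Λ j)) * Δ j) := by
  simp only [blockDepolarizeDual, Finset.mul_sum, Finset.sum_mul, Matrix.mul_smul,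
    Matrix.smul_mul]
  rw [Finset.sum_eq_single_of_mem j (Finset.mem_univ j) fun k _ hk => by
    rw [← mul_assoc, ← mul_assoc, hΔorth j k hk.symm, zero_mul, zero_mul, zero_mul, smul_zero]]
  simp only [← mul_assoc, hΔ]
  simp only [mul_assoc, hΔ]

variable [DecidableEq β]

theorem kroneckerSum_mul_blockDepolarize (hΔ : ∀ k, Δ k * Δ k = Δ k)
    (hΛ : ∀ k, Λ k * Λ k = Λ k) (hΛorth : ∀ j k, j ≠ k → Λ j * Λ k = 0)
    (ρ : Matrix (α × β) (α × β) ℂ) :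
    kroneckerSum Δ Λ * blockDepolarize Δ Λ ρ = blockDepolarize Δ Λ ρ := by
  simp only [blockDepolarize, Finset.mul_sum, Matrix.mul_smul]
  refine Finset.sum_congr rfl fun k _ => congrArg _ (kroneckerSum_mul_kronecker hΛ hΛorth ?_)
  rw [partialTraceRight_kronecker_mul_mul_kronecker, ← mul_assoc, ← mul_assoc, hΔ]

theorem partialTraceRight_blockDepolarize (hΛ : ∀ k, Λ k * Λ k = Λ k)
    (hΛtr : ∀ k, trace (Λ k) ≠ 0) (ρ : Matrix (α × β) (α × β) ℂ) :
    partialTraceRight (blockDepolarize Δ Λ ρ) =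
      ∑ k, Δ k * partialTraceRight (ρ * (1 ⊗ₖ Λ k)) * Δ k := by
  simp only [blockDepolarize, partialTraceRight_sum, partialTraceRight_smul,
    partialTraceRight_kronecker, smul_smul, inv_mul_cancel₀ (hΛtr _), one_smul,
    partialTraceRight_kronecker_mul_mul_kronecker, hΛ]

theorem kroneckerSum_mul_blockDepolarizeDual_mul (hΔ : ∀ k, Δ k * Δ k = Δ k)
    (hΔorth : ∀ j k, j ≠ k → Δ j * Δ k = 0) (hΛ : ∀ k, Λ k * Λ k = Λ k)
    (hΛorth : ∀ j k, j ≠ k → Λ j * Λ k = 0) (A : Matrix (α × β) (α × β) ℂ) :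
    kroneckerSum Δ Λ * (blockDepolarizeDual Δ Λ A ⊗ₖ 1) * kroneckerSum Δ Λ =
      ∑ k, (trace (Λ k))⁻¹ • ((Δ k * partialTraceRight (A * (1 ⊗ₖ Λ k)) * Δ k) ⊗ₖ Λ k) := by
  simp only [kroneckerSum_mul_kronecker_one_mul_kroneckerSum hΛ hΛorth,
    mul_blockDepolarizeDual_mul hΔ hΔorth, smul_kronecker]

theorem trace_mul_blockDepolarize (hΔ : ∀ k, Δ k * Δ k = Δ k)
    (hΔorth : ∀ j k, j ≠ k → Δ j * Δ k = 0) (hΛ : ∀ k, Λ k * Λ k = Λ k)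
    (hΛorth : ∀ j k, j ≠ k → Λ j * Λ k = 0) (A ρ : Matrix (α × β) (α × β) ℂ) :
    trace (A * blockDepolarize Δ Λ ρ) =
      trace (kroneckerSum Δ Λ * (blockDepolarizeDual Δ Λ A ⊗ₖ 1) * kroneckerSum Δ Λ * ρ) := by
  have trace_mul_conj (D F G : Matrix α α ℂ) :
      trace (F * (D * G * D)) = trace (G * (D * F * D)) := by
    rw [show F * (D * G * D) = F * D * (G * D) by simp only [mul_assoc], trace_mul_comm]
    simp only [mul_assoc]
  rw [kroneckerSum_mul_blockDepolarizeDual_mul hΔ hΔorth hΛ hΛorth, blockDepolarize,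
    Finset.mul_sum, Finset.sum_mul, trace_sum, trace_sum]
  refine Finset.sum_congr rfl fun k _ => ?_
  rw [Matrix.mul_smul, Matrix.smul_mul, trace_smul, trace_smul, trace_mul_kronecker,
    trace_mul_comm _ ρ, trace_mul_kronecker, partialTraceRight_kronecker_mul_mul_kronecker, hΛ,
    trace_mul_conj]

end BlockDepolarize

section Causality

variable {ιX ιY ιZ : Type*} [Fintype ιX] [Fintype ιY] [Fintype ιZ] [DecidableEq ιY]
  [DecidableEq ιZ]

theorem trace_conj_kronecker_one_kronecker_one_mul
    (U : Matrix ((ιX × ιY) × ιZ) ((ιX × ιY) × ιZ) ℂ) (X : Matrix ιX ιX ℂ)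
    (τ : Matrix ((ιX × ιY) × ιZ) ((ιX × ιY) × ιZ) ℂ) :
    trace (Uᴴ * ((X ⊗ₖ (1 : Matrix ιY ιY ℂ)) ⊗ₖ (1 : Matrix ιZ ιZ ℂ)) * U * τ) =
      trace (X * ptraceYZ3 (U * τ * Uᴴ)) := by
  rw [ptraceYZ3_eq, ← trace_kronecker_one_kronecker_one_mul, mul_assoc, mul_assoc,
    trace_mul_comm]
  simp only [mul_assoc]

theorem IsCausalOn.trace_conj_mul_eq_trace_blockDepolarizeDual [DecidableEq ιX] {ι : Type*}
    [Fintype ι] {Δ : ι → Matrix (ιX × ιY) (ιX × ιY) ℂ} {Λ : ι → Matrix ιZ ιZ ℂ}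
    (hΔh : ∀ k, (Δ k).IsHermitian) (hΔ : ∀ k, Δ k * Δ k = Δ k)
    (hΔorth : ∀ j k, j ≠ k → Δ j * Δ k = 0) (hΛpsd : ∀ k, (Λ k).PosSemidef)
    (hΛ : ∀ k, Λ k * Λ k = Λ k) (hΛtr : ∀ k, trace (Λ k) ≠ 0)
    (hΛorth : ∀ j k, j ≠ k → Λ j * Λ k = 0) {U : Matrix ((ιX × ιY) × ιZ) ((ιX × ιY) × ιZ) ℂ}
    (hU : IsCausalOn U (LinearMap.range (kroneckerSum Δ Λ).mulVecLin)) (X : Matrix ιX ιX ℂ)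
    {ρ : Matrix ((ιX × ιY) × ιZ) ((ιX × ιY) × ιZ) ℂ} (hρ : ρ.PosSemidef) (hρtr : ρ.trace = 1)
    (hρsupp : LinearMap.range ρ.mulVecLin ≤ LinearMap.range (kroneckerSum Δ Λ).mulVecLin) :
    trace (Uᴴ * ((X ⊗ₖ (1 : Matrix ιY ιY ℂ)) ⊗ₖ (1 : Matrix ιZ ιZ ℂ)) * U * ρ) =
      trace ((blockDepolarizeDual Δ Λ
        (Uᴴ * ((X ⊗ₖ (1 : Matrix ιY ιY ℂ)) ⊗ₖ (1 : Matrix ιZ ιZ ℂ)) * U) ⊗ₖ 1) * ρ) := by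
  set P := kroneckerSum Δ Λ
  set A := Uᴴ * ((X ⊗ₖ (1 : Matrix ιY ιY ℂ)) ⊗ₖ (1 : Matrix ιZ ιZ ℂ)) * U
  have hPh : P.IsHermitian := isHermitian_kroneckerSum hΔh fun k => (hΛpsd k).isHermitian
  have hPρ : P * ρ = ρ := mul_eq_self_of_range_le (kroneckerSum_mul_self hΔ hΛ hΛorth) hρsupp
  have hρP : ρ * P = ρ := by
    simpa [conjTranspose_mul, hρ.isHermitian.eq, hPh.eq] using congrArg conjTranspose hPρ
  set σ := blockDepolarize Δ Λ ρ
  have hσρ : partialTraceRight σ = partialTraceRight ρ := by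
    rw [partialTraceRight_blockDepolarize hΛ hΛtr,
      ← partialTraceRight_kroneckerSum_mul_mul_kroneckerSum hΛ hΛorth, hPρ, hρP]
  have hσtr : σ.trace = 1 := by
    rw [← trace_partialTraceRight, hσρ, trace_partialTraceRight, hρtr]
  have hσsupp : LinearMap.range σ.mulVecLin ≤ LinearMap.range P.mulVecLin :=
    range_mulVecLin_le_of_mul_eq (kroneckerSum_mul_blockDepolarize hΔ hΛ hΛorth ρ)
  have hcausal := hU ρ σ hρ hρtr hρsupp (hρ.blockDepolarize hΔh hΛpsd) hσtr hσsupp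
    (by rw [ptraceZ3_eq, ptraceZ3_eq, hσρ])
  calc trace (A * ρ) = trace (X * ptraceYZ3 (U * ρ * Uᴴ)) :=
        trace_conj_kronecker_one_kronecker_one_mul U X ρ
    _ = trace (A * σ) := by rw [hcausal, trace_conj_kronecker_one_kronecker_one_mul]
    _ = trace (P * (blockDepolarizeDual Δ Λ A ⊗ₖ 1) * P * ρ) :=
        trace_mul_blockDepolarize hΔ hΔorth hΛ hΛorth A ρ
    _ = trace ((blockDepolarizeDual Δ Λ A ⊗ₖ 1) * ρ) := by
        rw [mul_assoc, hPρ, trace_mul_comm, ← mul_assoc, hρP, trace_mul_comm]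

end Causality

theorem statement3_general {ιX ιY ιZ : Type*} [Fintype ιX] [Fintype ιY] [Fintype ιZ]
    [DecidableEq ιY] [DecidableEq ιZ]
    (n : ℕ) (Δ : Fin n → Matrix (ιX × ιY) (ιX × ιY) ℂ) (Λ : Fin n → Matrix ιZ ιZ ℂ)
    (hΔproj : ∀ k, (Δ k).IsHermitian ∧ Δ k * Δ k = Δ k)
    (hΔorth : ∀ j k, j ≠ k → Δ j * Δ k = 0)
    (hΛproj : ∀ k, (Λ k).IsHermitian ∧ Λ k * Λ k = Λ k)
    (hΛne : ∀ k, Λ k ≠ 0)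
    (hΛorth : ∀ j k, j ≠ k → Λ j * Λ k = 0)
    (U : Matrix ((ιX × ιY) × ιZ) ((ιX × ιY) × ιZ) ℂ)
    (hUcausal : IsCausalOn U (LinearMap.range (∑ k, Δ k ⊗ₖ Λ k).mulVecLin))
    (X : Matrix ιX ιX ℂ) :
    ∃ W : Matrix (ιX × ιY) (ιX × ιY) ℂ,
      (∑ k, Δ k ⊗ₖ Λ k) *
          (Uᴴ * ((X ⊗ₖ (1 : Matrix ιY ιY ℂ)) ⊗ₖ (1 : Matrix ιZ ιZ ℂ)) * U) *
          (∑ k, Δ k ⊗ₖ Λ k) =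
        (∑ k, Δ k ⊗ₖ Λ k) * (W ⊗ₖ (1 : Matrix ιZ ιZ ℂ)) * (∑ k, Δ k ⊗ₖ Λ k) := by
  classical
  obtain ⟨hΔh, hΔ⟩ := forall_and.1 hΔproj
  obtain ⟨hΛh, hΛ⟩ := forall_and.1 hΛproj
  have hΛpsd : ∀ k, (Λ k).PosSemidef := fun k => (hΛh k).posSemidef_of_mul_self_eq (hΛ k)
  have hΛtr : ∀ k, trace (Λ k) ≠ 0 := fun k => (hΛpsd k).trace_eq_zero_iff.not.2 (hΛne k)
  refine ⟨blockDepolarizeDual Δ Λ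
    (Uᴴ * ((X ⊗ₖ (1 : Matrix ιY ιY ℂ)) ⊗ₖ (1 : Matrix ιZ ιZ ℂ)) * U), ?_⟩
  rw [← sub_eq_zero, ← sub_mul, ← mul_sub]
  refine conj_eq_zero_of_forall_trace_mul_eq_zero (isHermitian_kroneckerSum hΔh hΛh)
    (kroneckerSum_mul_self hΔ hΛ hΛorth) fun ρ hρ hρtr hρsupp => ?_
  rw [sub_mul, trace_sub, sub_eq_zero]
  exact hUcausal.trace_conj_mul_eq_trace_blockDepolarizeDual hΔh hΔ hΔorth hΛpsd hΛ hΛtr hΛorth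
    X hρ hρtr hρsupp

/-- Given orthogonal families of nonzero projections `Δ_k` on `𝒳 ⊗ 𝒴` and `Λ_k` on `𝒵`,
set `Π = Σ_k Δ_k ⊗ Λ_k`.  If `U` is a unitary on `𝒳 ⊗ 𝒴 ⊗ 𝒵` that is `𝒴 → 𝒳` causal on
`im(Π)`, then for every operator `X` on `𝒳` there is an operator `W` on `𝒳 ⊗ 𝒴` with
`Π U*(X ⊗ 1)U Π = Π (W ⊗ 1) Π`. -/
theorem statement3 {ιX ιY ιZ : Type*} [Fintype ιX] [Fintype ιY] [Fintype ιZ]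
    [DecidableEq ιX] [DecidableEq ιY] [DecidableEq ιZ]
    (n : ℕ) (Δ : Fin n → Matrix (ιX × ιY) (ιX × ιY) ℂ) (Λ : Fin n → Matrix ιZ ιZ ℂ)
    (hΔproj : ∀ k, (Δ k).IsHermitian ∧ Δ k * Δ k = Δ k)
    (hΔne : ∀ k, Δ k ≠ 0)
    (hΔorth : ∀ j k, j ≠ k → Δ j * Δ k = 0)
    (hΛproj : ∀ k, (Λ k).IsHermitian ∧ Λ k * Λ k = Λ k)
    (hΛne : ∀ k, Λ k ≠ 0)
    (hΛorth : ∀ j k, j ≠ k → Λ j * Λ k = 0)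
    (U : Matrix ((ιX × ιY) × ιZ) ((ιX × ιY) × ιZ) ℂ)
    (hU : U ∈ Matrix.unitaryGroup ((ιX × ιY) × ιZ) ℂ)
    (hUcausal : IsCausalOn U (LinearMap.range (∑ k, Δ k ⊗ₖ Λ k).mulVecLin))
    (X : Matrix ιX ιX ℂ) :
    ∃ W : Matrix (ιX × ιY) (ιX × ιY) ℂ,
      (∑ k, Δ k ⊗ₖ Λ k) *
          (Uᴴ * ((X ⊗ₖ (1 : Matrix ιY ιY ℂ)) ⊗ₖ (1 : Matrix ιZ ιZ ℂ)) * U) *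
          (∑ k, Δ k ⊗ₖ Λ k) =
        (∑ k, Δ k ⊗ₖ Λ k) * (W ⊗ₖ (1 : Matrix ιZ ιZ ℂ)) * (∑ k, Δ k ⊗ₖ Λ k) :=
  statement3_general n Δ Λ hΔproj hΔorth hΛproj hΛne hΛorth U hUcausal X
end

section
/- Let 𝒲 and 𝒵 be finite-dimensional complex Hilbert spaces, let Π be an orthogonal projection operator on 𝒲⊗𝒵, and let A be a linear operator on 𝒲⊗𝒵 such that ⟨H, A⟩ = 0 for every Hermitian operator H on 𝒲⊗𝒵 with im(H) ⊆ im(Π) and Tr_𝒵(H) = 0. Then for every unitary operator Z on 𝒵 satisfying (1_𝒲⊗Z)Π = Π(1_𝒲⊗Z), one has (1_𝒲⊗Z)(ΠAΠ) = (ΠAΠ)(1_𝒲⊗Z). -/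
open Matrix
open scoped Kronecker ComplexOrder

/-!
With `U = 1_𝒲 ⊗ Z` unitary and `M = ΠAΠ` it suffices to show `UMU* = M`. For every Hermitian `K` with
`ΠKΠ = K`, the operator `H = U*KU - K` is Hermitian, supported in `im Π` (as `U` commutes with
`Π`), and has vanishing partial trace over `𝒵` (as `U` acts on `𝒵` only). Hence
`0 = ⟨H, A⟩ = Tr(HM) = Tr(K (UMU* - M))`. So `D = UMU* - M`, which also satisfies `ΠDΠ = D`, is
orthogonal to every Hermitian operator supported in `im Π`; splitting `D*` into its real and
imaginary parts gives `Tr(D*D) = 0`, i.e. `D = 0`.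
-/

open scoped ComplexStarModule

lemma ptraceZ2_sub {ιW ιZ : Type*} [Fintype ιZ] (K L : Matrix (ιW × ιZ) (ιW × ιZ) ℂ) :
    ptraceZ2 (K - L) = ptraceZ2 K - ptraceZ2 L := by
  ext w w'
  simp [ptraceZ2, Finset.sum_sub_distrib]

lemma ptraceZ2_mul_one_kronecker {ιW ιZ : Type*} [Fintype ιW] [Fintype ιZ] [DecidableEq ιW]
    (K : Matrix (ιW × ιZ) (ιW × ιZ) ℂ) (B : Matrix ιZ ιZ ℂ) :
    ptraceZ2 (K * ((1 : Matrix ιW ιW ℂ) ⊗ₖ B)) = ptraceZ2 (((1 : Matrix ιW ιW ℂ) ⊗ₖ B) * K) := by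
  ext w w'
  simp only [ptraceZ2, mul_apply, kroneckerMap_apply, one_apply, ite_mul, one_mul, zero_mul,
    mul_ite, mul_zero, Fintype.sum_prod_type, Finset.sum_ite_irrel, Finset.sum_const_zero,
    Finset.sum_ite_eq', Finset.mem_univ, ↓reduceIte, of_apply, Finset.sum_ite_eq]
  rw [Finset.sum_comm]
  simp only [mul_comm]

lemma ptraceZ2_conjTranspose_mul_mul_one_kronecker {ιW ιZ : Type*} [Fintype ιW] [Fintype ιZ]
    [DecidableEq ιW] [DecidableEq ιZ] {Z : Matrix ιZ ιZ ℂ} (hZ : Z * Zᴴ = 1)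
    (K : Matrix (ιW × ιZ) (ιW × ιZ) ℂ) :
    ptraceZ2 (((1 : Matrix ιW ιW ℂ) ⊗ₖ Z)ᴴ * K * ((1 : Matrix ιW ιW ℂ) ⊗ₖ Z)) = ptraceZ2 K := by
  rw [ptraceZ2_mul_one_kronecker, ← Matrix.mul_assoc, conjTranspose_kronecker, conjTranspose_one,
    ← mul_kronecker_mul, hZ, Matrix.one_mul, one_kronecker_one, Matrix.one_mul]

lemma conj_sub_corner {R : Type*} [Ring R] {P U V K : R} (hU : Commute P U) (hV : Commute P V)
    (hK : P * K * P = K) : P * (V * K * U - K) * P = V * K * U - K := by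
  rw [mul_sub, sub_mul, hK]
  congr 1
  calc P * (V * K * U) * P = V * (P * K * P) * U := by
        simp only [mul_assoc, hU.eq]
        rw [← mul_assoc P V, hV.eq]
        simp only [mul_assoc]
    _ = V * K * U := by rw [hK]

lemma conjTranspose_corner {n R : Type*} [Fintype n] [Semiring R] [StarRing R]
    {P K : Matrix n n R} (hP : P.IsHermitian) (hK : P * K * P = K) : P * Kᴴ * P = Kᴴ := by
  simpa [conjTranspose_mul, hP.eq, Matrix.mul_assoc] using congrArg conjTranspose hK

lemma realPart_corner {n : Type*} [Fintype n] {P K : Matrix n n ℂ} (hP : P.IsHermitian)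
    (hK : P * K * P = K) : P * (ℜ K : Matrix n n ℂ) * P = ℜ K := by
  have hKs : P * star K * P = star K := conjTranspose_corner hP hK
  rw [realPart_apply_coe, Matrix.mul_smul, Matrix.smul_mul, Matrix.mul_add, Matrix.add_mul, hK,
    hKs]

lemma imaginaryPart_corner {n : Type*} [Fintype n] {P K : Matrix n n ℂ} (hP : P.IsHermitian)
    (hK : P * K * P = K) : P * (ℑ K : Matrix n n ℂ) * P = ℑ K := by
  have hKs : P * star K * P = star K := conjTranspose_corner hP hK
  rw [imaginaryPart_apply_coe, Matrix.mul_smul, Matrix.smul_mul, Matrix.mul_smul, Matrix.smul_mul,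
    Matrix.mul_sub, Matrix.sub_mul, hK, hKs]

lemma eq_zero_of_forall_isHermitian_corner_trace_mul_eq_zero {n : Type*} [Fintype n]
    {P D : Matrix n n ℂ} (hP : P.IsHermitian) (hD : P * D * P = D)
    (h : ∀ K : Matrix n n ℂ, K.IsHermitian → P * K * P = K → (K * D).trace = 0) : D = 0 := by
  have hDc := conjTranspose_corner hP hD
  have hre := h _ (isHermitian_iff_isSelfAdjoint.mpr (ℜ Dᴴ).2) (realPart_corner hP hDc)
  have him := h _ (isHermitian_iff_isSelfAdjoint.mpr (ℑ Dᴴ).2) (imaginaryPart_corner hP hDc)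
  rw [← trace_conjTranspose_mul_self_eq_zero_iff, ← realPart_add_I_smul_imaginaryPart Dᴴ,
    Matrix.add_mul, Matrix.smul_mul, trace_add, trace_smul, hre, him, smul_zero, add_zero]

lemma trace_conj_sub_mul {n R : Type*} [Fintype n] [CommRing R] (U V K M : Matrix n n R) :
    ((V * K * U - K) * M).trace = (K * (U * M * V - M)).trace := by
  rw [Matrix.sub_mul, Matrix.mul_sub, trace_sub, trace_sub, Matrix.mul_assoc, Matrix.mul_assoc,
    trace_mul_comm, Matrix.mul_assoc, Matrix.mul_assoc]

lemma trace_mul_corner {n R : Type*} [Fintype n] [CommSemiring R] (H P A : Matrix n n R) :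
    (H * (P * A * P)).trace = ((P * H * P) * A).trace := by
  rw [← Matrix.mul_assoc, trace_mul_comm, ← Matrix.mul_assoc, ← Matrix.mul_assoc]

lemma range_mulVecLin_le_of_corner {n R : Type*} [Fintype n] [CommSemiring R]
    {P H : Matrix n n R} (hH : P * H * P = H) :
    LinearMap.range H.mulVecLin ≤ LinearMap.range P.mulVecLin := by
  rw [← hH, Matrix.mul_assoc, Matrix.mulVecLin_mul]
  exact LinearMap.range_comp_le_range _ _

/-- Let `Π` be an orthogonal projection on `𝒲 ⊗ 𝒵` and `A` an operator on `𝒲 ⊗ 𝒵` with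
`⟨H, A⟩ = 0` for every Hermitian `H` with `im(H) ⊆ im(Π)` and `Tr_𝒵(H) = 0`.  Then
`Π A Π` commutes with `1_𝒲 ⊗ Z` for every unitary `Z` on `𝒵` commuting with `Π`. -/
theorem statement8 {ιW ιZ : Type*} [Fintype ιW] [Fintype ιZ] [DecidableEq ιW] [DecidableEq ιZ]
    (P : Matrix (ιW × ιZ) (ιW × ιZ) ℂ)
    (hPproj : P.IsHermitian ∧ P * P = P)
    (A : Matrix (ιW × ιZ) (ιW × ιZ) ℂ)
    (hA : ∀ H : Matrix (ιW × ιZ) (ιW × ιZ) ℂ, H.IsHermitian →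
      LinearMap.range H.mulVecLin ≤ LinearMap.range P.mulVecLin →
      ptraceZ2 H = 0 → (Hᴴ * A).trace = 0)
    (Z : Matrix ιZ ιZ ℂ) (hZ : Z ∈ Matrix.unitaryGroup ιZ ℂ)
    (hZP : ((1 : Matrix ιW ιW ℂ) ⊗ₖ Z) * P = P * ((1 : Matrix ιW ιW ℂ) ⊗ₖ Z)) :
    ((1 : Matrix ιW ιW ℂ) ⊗ₖ Z) * (P * A * P) = (P * A * P) * ((1 : Matrix ιW ιW ℂ) ⊗ₖ Z) := by
  obtain ⟨hPH, hPP⟩ := hPproj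
  set U := (1 : Matrix ιW ιW ℂ) ⊗ₖ Z
  have hU : U ∈ unitary (Matrix (ιW × ιZ) (ιW × ιZ) ℂ) := kronecker_mem_unitary (one_mem _) hZ
  have hPU : Commute P U := hZP.symm
  have hPUc : Commute P Uᴴ := by
    simpa only [star_eq_conjTranspose, hPH.eq] using hPU.star_star
  have hM : P * (P * A * P) * P = P * A * P := by
    simp only [← Matrix.mul_assoc, hPP]
    rw [Matrix.mul_assoc, hPP]
  have hconj : U * (P * A * P) * Uᴴ = P * A * P := by
    refine sub_eq_zero.mp <| eq_zero_of_forall_isHermitian_corner_trace_mul_eq_zero hPH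
      (conj_sub_corner hPUc hPU hM) fun K hK hKP => ?_
    have hH : (Uᴴ * K * U - K).IsHermitian := (isHermitian_conjTranspose_mul_mul U hK).sub hK
    have hHP := conj_sub_corner hPU hPUc hKP
    have hpt : ptraceZ2 (Uᴴ * K * U - K) = 0 := by
      rw [ptraceZ2_sub, ptraceZ2_conjTranspose_mul_mul_one_kronecker
        (Unitary.mul_star_self_of_mem hZ), sub_self]
    rw [← trace_conj_sub_mul, trace_mul_corner, hHP, ← hH.eq]
    exact hA _ hH (range_mulVecLin_le_of_corner hHP) hpt
  have hUU : Uᴴ * U = 1 := Unitary.star_mul_self_of_mem hU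
  calc U * (P * A * P) = U * (P * A * P) * Uᴴ * U := by
        rw [Matrix.mul_assoc _ Uᴴ, hUU, Matrix.mul_one]
    _ = P * A * P * U := by rw [hconj]
end

section
/- Let 𝒲 and 𝒵 be finite-dimensional complex Hilbert spaces, let {Δ_1,…,Δ_n} be an orthogonal set of nonzero projection operators on 𝒲, let {Λ_1,…,Λ_n} be an orthogonal set of nonzero projection operators on 𝒵, and let Π = Σ_{k=1}^n Δ_k⊗Λ_k. Let B be a linear operator on 𝒲⊗𝒵 such that B = ΠBΠ and such that B commutes with 1_𝒲⊗Z for every unitary operator Z on 𝒵 satisfying ZΛ_k = Λ_kZ for all k ∈ {1,…,n}. Then there exist linear operators W_1,…,W_n on 𝒲 satisfying W_k = Δ_kW_kΔ_k for each k such that B = Σ_{k=1}^n W_k⊗Λ_k. -/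
/-!
If `v` lies in the range of `Λ k`, the reflection `1 - 2 v v* / ‖v‖²` is a unitary commuting with
every `Λ j`, so `B` commutes with `1 ⊗ v v*`. By polarization `B` then commutes with `1 ⊗ R` for
every `R` in the corner `Λ k * M * Λ k`, in particular with `1 ⊗ Λ k`. This kills the cross terms
of `Π B Π`, and each diagonal term `(Δ k ⊗ Λ k) B (Δ k ⊗ Λ k)` commutes with the ampliated corner
algebra; comparing entries shows that such an operator has the form `X ⊗ Λ k`.
-/

open Matrix
open scoped Kronecker ComplexOrder

theorem IsStarProjection.mem_of_forall_unitary_mem {𝕜 A κ : Type*} [Field 𝕜] [CharZero 𝕜]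
    [Ring A] [StarRing A] [Algebra 𝕜 A] {S : Subalgebra 𝕜 A} {Λ : κ → A}
    (hS : ∀ U ∈ unitary A, (∀ k, Commute U (Λ k)) → U ∈ S)
    {p : A} (hp : IsStarProjection p) (hpΛ : ∀ k, Commute p (Λ k)) : p ∈ S := by
  have hU : 2 * p - 1 ∈ S := hS _ hp.two_mul_sub_one_mem_unitary fun k =>
    (((Commute.ofNat_left 2 (Λ k)).mul_left (hpΛ k))).sub_left (Commute.one_left _)
  have hp_eq : p = (2 : 𝕜)⁻¹ • (2 * p - 1 + 1) := by
    rw [sub_add_cancel, two_mul, ← two_smul 𝕜 p, smul_smul, inv_mul_cancel₀ two_ne_zero, one_smul]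
  rw [hp_eq]
  exact S.smul_mem (S.add_mem hU S.one_mem) _

theorem Finset.sum_mul_mul_sum_eq_sum_of_ne {α ι : Type*} [NonUnitalSemiring α] {s : Finset ι}
    {P : ι → α} {B : α} (h : ∀ j ∈ s, ∀ k ∈ s, j ≠ k → P j * B * P k = 0) :
    (∑ j ∈ s, P j) * B * (∑ k ∈ s, P k) = ∑ k ∈ s, P k * B * P k := by
  rw [Finset.sum_mul, Finset.sum_mul]
  refine Finset.sum_congr rfl fun j hj => ?_
  rw [Finset.mul_sum]
  exact Finset.sum_eq_single_of_mem j hj fun k hk hkj => h j hj k hk (Ne.symm hkj)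

namespace Matrix

variable {m n R : Type*} [Fintype m] [Fintype n]

theorem isStarProjection_inv_smul_vecMulVec {K : Type*} [Field K] [StarRing K] (v : n → K) :
    IsStarProjection ((star v ⬝ᵥ v)⁻¹ • vecMulVec v (star v)) := by
  have hc : star (star v ⬝ᵥ v) = star v ⬝ᵥ v := (star_dotProduct v v).symm
  constructor
  · rw [IsIdempotentElem, smul_mul_smul_comm, vecMulVec_mul_vecMulVec, vecMulVec_smul, smul_smul]
    congr 1
    simpa only [inv_inv] using mul_self_mul_inv (star v ⬝ᵥ v)⁻¹
  · rw [IsSelfAdjoint, star_smul, star_inv₀, hc]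
    congr 1
    rw [star_eq_conjTranspose, conjTranspose_vecMulVec, star_star]

theorem vecMulVec_star_mem_of_forall_mem {S : Submodule ℂ (Matrix n n ℂ)}
    {V : Submodule ℂ (n → ℂ)} (hV : ∀ v ∈ V, vecMulVec v (star v) ∈ S)
    {x y : n → ℂ} (hx : x ∈ V) (hy : y ∈ V) : vecMulVec x (star y) ∈ S := by
  have hmem (c : ℂ) : vecMulVec (x + c • y) (star (x + c • y)) ∈ S :=
    hV _ (V.add_mem hx (V.smul_mem c hy))
  have polarization : vecMulVec x (star y) = (4 : ℂ)⁻¹ •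
      (vecMulVec (x + (1 : ℂ) • y) (star (x + (1 : ℂ) • y))
        - vecMulVec (x + (-1 : ℂ) • y) (star (x + (-1 : ℂ) • y))
        + Complex.I • vecMulVec (x + Complex.I • y) (star (x + Complex.I • y))
        - Complex.I • vecMulVec (x + (-Complex.I) • y) (star (x + (-Complex.I) • y))) := by
    ext i j
    simp only [Matrix.smul_apply, Matrix.sub_apply, Matrix.add_apply, vecMulVec_apply,
      Pi.star_apply, Pi.add_apply, Pi.smul_apply, star_add, smul_eq_mul, star_smul,
      RCLike.star_def, map_neg, map_one, Complex.conj_I]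
    linear_combination
      (x i * (starRingEnd ℂ) (y j) - y i * (starRingEnd ℂ) (x j)) * Complex.I_sq / 2
  rw [polarization]
  exact S.smul_mem _ (S.sub_mem (S.add_mem (S.sub_mem (hmem 1) (hmem (-1)))
    (S.smul_mem _ (hmem _))) (S.smul_mem _ (hmem _)))

theorem mul_single_one_mul [Semiring R] [DecidableEq n] (L : Matrix n n R) (p q : n) :
    L * single p q 1 * L = vecMulVec (L.col p) (L.row q) := by
  rw [single_eq_single_vecMulVec_single, mul_vecMulVec, vecMulVec_mul, mulVec_single_one,
    single_one_vecMul]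

section UnitaryCommutant

variable [DecidableEq n] {κ : Type*} {S : Subalgebra ℂ (Matrix n n ℂ)} {Λ : κ → Matrix n n ℂ}

theorem vecMulVec_star_mem_of_mem_range
    (hS : ∀ U ∈ unitary (Matrix n n ℂ), (∀ k, Commute U (Λ k)) → U ∈ S)
    (hΛH : ∀ k, (Λ k).IsHermitian) (hΛorth : ∀ j k, j ≠ k → Λ j * Λ k = 0)
    {k : κ} (hk : Λ k * Λ k = Λ k) {v : n → ℂ} (hv : v ∈ LinearMap.range (Λ k).mulVecLin) :
    vecMulVec v (star v) ∈ S := by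
  obtain ⟨w, hw⟩ := hv
  have hΛv (j : κ) : Λ j *ᵥ v = v ∨ Λ j *ᵥ v = 0 := by
    rw [← hw, mulVecLin_apply, mulVec_mulVec]
    rcases eq_or_ne j k with rfl | hjk
    · exact .inl (by rw [hk])
    · exact .inr (by rw [hΛorth j k hjk, zero_mulVec])
  rcases eq_or_ne v 0 with hv0 | hv0
  · simp [hv0]
  have hc : star v ⬝ᵥ v ≠ 0 := dotProduct_star_self_eq_zero.not.mpr hv0
  rw [← one_smul ℂ (vecMulVec v (star v)), ← mul_inv_cancel₀ hc, ← smul_smul]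
  refine S.smul_mem ((isStarProjection_inv_smul_vecMulVec v).mem_of_forall_unitary_mem hS
    fun j => (Commute.smul_left ?_ _)) _
  have hvΛ : star v ᵥ* Λ j = star (Λ j *ᵥ v) := by rw [star_mulVec, (hΛH j).eq]
  change vecMulVec v (star v) * Λ j = Λ j * vecMulVec v (star v)
  rw [vecMulVec_mul, mul_vecMulVec, hvΛ]
  rcases hΛv j with h | h <;> simp [h]

theorem mul_mul_mem_of_forall_unitary_mem
    (hS : ∀ U ∈ unitary (Matrix n n ℂ), (∀ k, Commute U (Λ k)) → U ∈ S)
    (hΛH : ∀ k, (Λ k).IsHermitian) (hΛorth : ∀ j k, j ≠ k → Λ j * Λ k = 0)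
    {k : κ} (hk : Λ k * Λ k = Λ k) (R : Matrix n n ℂ) : Λ k * R * Λ k ∈ S := by
  have hrank {x y : n → ℂ} (hx : x ∈ LinearMap.range (Λ k).mulVecLin)
      (hy : y ∈ LinearMap.range (Λ k).mulVecLin) : vecMulVec x (star y) ∈ S :=
    vecMulVec_star_mem_of_forall_mem (S := Subalgebra.toSubmodule S)
      (fun v hv => vecMulVec_star_mem_of_mem_range hS hΛH hΛorth hk hv) hx hy
  rw [matrix_eq_sum_single R]
  simp only [Finset.mul_sum, Finset.sum_mul]
  refine Subalgebra.sum_mem _ fun p _ => Subalgebra.sum_mem _ fun q _ => ?_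
  have hsingle : single p q (R p q) = R p q • single p q (1 : ℂ) := by
    rw [smul_single, smul_eq_mul, mul_one]
  have hrow : (Λ k).row q = star ((Λ k).col q) := by
    ext z
    simp [← (hΛH k).apply z q]
  rw [hsingle, mul_smul_comm, smul_mul_assoc, mul_single_one_mul, hrow]
  exact S.smul_mem (hrank ⟨_, mulVec_single_one _ _⟩ ⟨_, mulVec_single_one _ _⟩) _

end UnitaryCommutant

section Kronecker

variable [DecidableEq m]

variable (m R) in
def oneKroneckerAlgHom [DecidableEq n] [CommSemiring R] :
    Matrix n n R →ₐ[R] Matrix (m × n) (m × n) R where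
  toFun Z := (1 : Matrix m m R) ⊗ₖ Z
  map_one' := one_kronecker_one
  map_mul' Z Z' := by rw [← mul_kronecker_mul, mul_one]
  map_zero' := kronecker_zero _
  map_add' := kronecker_add _
  commutes' r := by
    rw [Algebra.algebraMap_eq_smul_one, Algebra.algebraMap_eq_smul_one, kronecker_smul,
      one_kronecker_one]

variable (m) in
def kroneckerCommutant [DecidableEq n] [CommSemiring R] (B : Matrix (m × n) (m × n) R) :
    Subalgebra R (Matrix n n R) :=
  (Subalgebra.centralizer R {B}).comap (oneKroneckerAlgHom m R)

@[simp]
theorem mem_kroneckerCommutant [DecidableEq n] [CommSemiring R] {B : Matrix (m × n) (m × n) R}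
    {Z : Matrix n n R} : Z ∈ kroneckerCommutant m B ↔ Commute B (1 ⊗ₖ Z) := by
  simp [kroneckerCommutant, Subalgebra.mem_centralizer_iff, oneKroneckerAlgHom, Commute,
    SemiconjBy]

section CommSemiring

variable [CommSemiring R]

theorem mul_one_kronecker_apply (C : Matrix (m × n) (m × n) R) (M : Matrix n n R) (a b : m)
    (x y : n) : (C * ((1 : Matrix m m R) ⊗ₖ M)) (a, x) (b, y) = ∑ z, C (a, x) (b, z) * M z y := by
  simp [mul_apply, Fintype.sum_prod_type, one_apply]

theorem one_kronecker_mul_apply (M : Matrix n n R) (C : Matrix (m × n) (m × n) R) (a b : m)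
    (x y : n) : (((1 : Matrix m m R) ⊗ₖ M) * C) (a, x) (b, y) = ∑ z, M x z * C (a, z) (b, y) := by
  simp [mul_apply, Fintype.sum_prod_type, one_apply]

theorem apply_mul_eq_mul_apply_of_commute [DecidableEq n] {L : Matrix n n R}
    {C : Matrix (m × n) (m × n) R}
    (hCL : C * (1 ⊗ₖ L) = C) (hLC : (1 ⊗ₖ L) * C = C) {p q : n}
    (hcomm : Commute C (1 ⊗ₖ (L * single p q 1 * L))) (a b : m) (x y : n) :
    C (a, x) (b, p) * L q y = L x p * C (a, q) (b, y) := by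
  have h := congr_fun (congr_fun hcomm.eq (a, x)) (b, y)
  simp only [mul_one_kronecker_apply, one_kronecker_mul_apply, mul_single_one_mul,
    vecMulVec_apply, col_apply, row_apply] at h
  calc C (a, x) (b, p) * L q y = (C * ((1 : Matrix m m R) ⊗ₖ L)) (a, x) (b, p) * L q y := by
        rw [hCL]
    _ = ∑ z, C (a, x) (b, z) * (L z p * L q y) := by
      rw [mul_one_kronecker_apply, Finset.sum_mul]
      simp only [mul_assoc]
    _ = ∑ z, L x p * L q z * C (a, z) (b, y) := h
    _ = L x p * (((1 : Matrix m m R) ⊗ₖ L) * C) (a, q) (b, y) := by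
      rw [one_kronecker_mul_apply, Finset.mul_sum]
      simp only [mul_assoc]
    _ = L x p * C (a, q) (b, y) := by rw [hLC]

theorem kronecker_mul_mul_kronecker_eq_zero {B : Matrix (m × n) (m × n) R} {L L' : Matrix n n R}
    (hB : Commute B (1 ⊗ₖ L)) (hL : L * L = L) (hLL' : L * L' = 0) (A A' : Matrix m m R) :
    (A ⊗ₖ L) * B * (A' ⊗ₖ L') = 0 := by
  have hAL : A ⊗ₖ L = (A ⊗ₖ L) * (1 ⊗ₖ L) := by rw [← mul_kronecker_mul, mul_one, hL]
  have hLA' : (1 ⊗ₖ L) * (A' ⊗ₖ L') = 0 := by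
    rw [← mul_kronecker_mul, hLL', kronecker_zero]
  calc (A ⊗ₖ L) * B * (A' ⊗ₖ L') = (A ⊗ₖ L) * ((1 ⊗ₖ L) * B) * (A' ⊗ₖ L') := by
        rw [← mul_assoc, ← hAL]
    _ = (A ⊗ₖ L) * B * ((1 ⊗ₖ L) * (A' ⊗ₖ L')) := by rw [← hB.eq]; simp only [mul_assoc]
    _ = 0 := by rw [hLA', mul_zero]

end CommSemiring

theorem exists_eq_kronecker_of_commute {K : Type*} [Field K] {L : Matrix n n K}
    {C : Matrix (m × n) (m × n) K} (hCL : C * (1 ⊗ₖ L) = C) (hLC : (1 ⊗ₖ L) * C = C)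
    (hcomm : ∀ R, Commute C (1 ⊗ₖ (L * R * L))) : ∃ X : Matrix m m K, C = X ⊗ₖ L := by
  classical
  rcases eq_or_ne L 0 with rfl | hL
  · exact ⟨0, by rw [← hCL, kronecker_zero, mul_zero, zero_kronecker]⟩
  obtain ⟨q, y, hqy⟩ : ∃ q y, L q y ≠ 0 := by
    by_contra! h
    exact hL (ext h)
  refine ⟨of fun a b => C (a, q) (b, y) / L q y, ?_⟩
  ext ⟨a, x⟩ ⟨b, p⟩
  rw [kronecker_apply, of_apply, div_mul_eq_mul_div, eq_div_iff hqy,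
    apply_mul_eq_mul_apply_of_commute hCL hLC (hcomm _), mul_comm]

theorem exists_eq_kronecker_of_commute_corner {K : Type*} [Field K] {B : Matrix (m × n) (m × n) K}
    {Δ : Matrix m m K} {L : Matrix n n K} (hΔ : Δ * Δ = Δ) (hL : L * L = L)
    (hB : ∀ R, Commute B (1 ⊗ₖ (L * R * L))) :
    ∃ W : Matrix m m K, W = Δ * W * Δ ∧ (Δ ⊗ₖ L) * B * (Δ ⊗ₖ L) = W ⊗ₖ L := by
  set P := Δ ⊗ₖ L
  have hP : P * P = P := by rw [← mul_kronecker_mul, hΔ, hL]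
  have hPL : P * (1 ⊗ₖ L) = P := by rw [← mul_kronecker_mul, mul_one, hL]
  have hLP : (1 ⊗ₖ L) * P = P := by rw [← mul_kronecker_mul, one_mul, hL]
  have hPcomm (R : Matrix n n K) : Commute P (1 ⊗ₖ (L * R * L)) := by
    change P * _ = _ * P
    rw [← mul_kronecker_mul, ← mul_kronecker_mul, mul_one, one_mul, ← mul_assoc, ← mul_assoc,
      hL, mul_assoc _ L L, hL]
  obtain ⟨X, hX⟩ := exists_eq_kronecker_of_commute (C := P * B * P)
    (by rw [mul_assoc, hPL]) (by rw [← mul_assoc, ← mul_assoc, hLP])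
    fun R => ((hPcomm R).mul_left (hB R)).mul_left (hPcomm R)
  refine ⟨Δ * X * Δ, by rw [← mul_assoc, ← mul_assoc, hΔ, mul_assoc _ Δ Δ, hΔ], ?_⟩
  calc P * B * P = P * (P * B * P) * P := by simp only [← mul_assoc, hP]; rw [mul_assoc _ P P, hP]
    _ = (Δ * X * Δ) ⊗ₖ L := by rw [hX, ← mul_kronecker_mul, ← mul_kronecker_mul, hL, hL]

end Kronecker

end Matrix

theorem statement9_general {ιW ιZ : Type*} [Fintype ιW] [Fintype ιZ] [DecidableEq ιW] [DecidableEq ιZ]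
    (n : ℕ) (Δ : Fin n → Matrix ιW ιW ℂ) (Λ : Fin n → Matrix ιZ ιZ ℂ)
    (hΔproj : ∀ k, (Δ k).IsHermitian ∧ Δ k * Δ k = Δ k)
    (hΛproj : ∀ k, (Λ k).IsHermitian ∧ Λ k * Λ k = Λ k)
    (hΛorth : ∀ j k, j ≠ k → Λ j * Λ k = 0)
    (B : Matrix (ιW × ιZ) (ιW × ιZ) ℂ)
    (hB : B = (∑ k, Δ k ⊗ₖ Λ k) * B * (∑ k, Δ k ⊗ₖ Λ k))
    (hBcomm : ∀ Z : Matrix ιZ ιZ ℂ, Z ∈ Matrix.unitaryGroup ιZ ℂ →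
      (∀ k, Z * Λ k = Λ k * Z) →
      B * ((1 : Matrix ιW ιW ℂ) ⊗ₖ Z) = ((1 : Matrix ιW ιW ℂ) ⊗ₖ Z) * B) :
    ∃ W : Fin n → Matrix ιW ιW ℂ,
      (∀ k, W k = Δ k * W k * Δ k) ∧ B = ∑ k, (W k) ⊗ₖ (Λ k) := by
  have hΛI (k : Fin n) : Λ k * Λ k = Λ k := (hΛproj k).2
  have hcorner (k : Fin n) (R : Matrix ιZ ιZ ℂ) : Commute B (1 ⊗ₖ (Λ k * R * Λ k)) :=
    mem_kroneckerCommutant.mp <| mul_mul_mem_of_forall_unitary_mem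
      (fun U hU hUΛ => mem_kroneckerCommutant.mpr (hBcomm U hU hUΛ))
      (fun k => (hΛproj k).1) hΛorth (hΛI k) R
  have hcross (j k : Fin n) (hjk : j ≠ k) : (Δ j ⊗ₖ Λ j) * B * (Δ k ⊗ₖ Λ k) = 0 :=
    kronecker_mul_mul_kronecker_eq_zero (by simpa [hΛI j] using hcorner j 1) (hΛI j)
      (hΛorth j k hjk) _ _
  choose W hWΔ hW using fun k =>
    exists_eq_kronecker_of_commute_corner (hΔproj k).2 (hΛI k) (hcorner k)
  refine ⟨W, hWΔ, ?_⟩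
  calc B = (∑ k, Δ k ⊗ₖ Λ k) * B * (∑ k, Δ k ⊗ₖ Λ k) := hB
    _ = ∑ k, (Δ k ⊗ₖ Λ k) * B * (Δ k ⊗ₖ Λ k) :=
      Finset.sum_mul_mul_sum_eq_sum_of_ne fun j _ k _ => hcross j k
    _ = ∑ k, W k ⊗ₖ Λ k := Finset.sum_congr rfl fun k _ => hW k

/-- Given orthogonal families of nonzero (Hermitian, idempotent) projections `Δ_k` on `𝒲`
and `Λ_k` on `𝒵`, set `Π = Σ_k Δ_k ⊗ Λ_k`.  If `B` is an operator on `𝒲 ⊗ 𝒵` with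
`B = Π B Π` that commutes with `1_𝒲 ⊗ Z` for every unitary `Z` on `𝒵` commuting with every
`Λ_k`, then `B = Σ_k W_k ⊗ Λ_k` for some operators `W_k` on `𝒲` with `W_k = Δ_k W_k Δ_k`. -/
theorem statement9 {ιW ιZ : Type*} [Fintype ιW] [Fintype ιZ] [DecidableEq ιW] [DecidableEq ιZ]
    (n : ℕ) (Δ : Fin n → Matrix ιW ιW ℂ) (Λ : Fin n → Matrix ιZ ιZ ℂ)
    (hΔproj : ∀ k, (Δ k).IsHermitian ∧ Δ k * Δ k = Δ k)
    (hΔne : ∀ k, Δ k ≠ 0)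
    (hΔorth : ∀ j k, j ≠ k → Δ j * Δ k = 0)
    (hΛproj : ∀ k, (Λ k).IsHermitian ∧ Λ k * Λ k = Λ k)
    (hΛne : ∀ k, Λ k ≠ 0)
    (hΛorth : ∀ j k, j ≠ k → Λ j * Λ k = 0)
    (B : Matrix (ιW × ιZ) (ιW × ιZ) ℂ)
    (hB : B = (∑ k, Δ k ⊗ₖ Λ k) * B * (∑ k, Δ k ⊗ₖ Λ k))
    (hBcomm : ∀ Z : Matrix ιZ ιZ ℂ, Z ∈ Matrix.unitaryGroup ιZ ℂ →
      (∀ k, Z * Λ k = Λ k * Z) →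
      B * ((1 : Matrix ιW ιW ℂ) ⊗ₖ Z) = ((1 : Matrix ιW ιW ℂ) ⊗ₖ Z) * B) :
    ∃ W : Fin n → Matrix ιW ιW ℂ,
      (∀ k, W k = Δ k * W k * Δ k) ∧ B = ∑ k, (W k) ⊗ₖ (Λ k) :=
  statement9_general n Δ Λ hΔproj hΛproj hΛorth B hB hBcomm
end

section
/- Let 𝒲 and 𝒵 be finite-dimensional complex Hilbert spaces, let {Δ_1,…,Δ_n} be an orthogonal set of nonzero projection operators on 𝒲, let {Λ_1,…,Λ_n} be an orthogonal set of nonzero projection operators on 𝒵, and let Π = Σ_{k=1}^n Δ_k⊗Λ_k. Let A be a unitary operator on 𝒲⊗𝒵 with AΠ = ΠA, and suppose ΠAΠ = Σ_{k=1}^n W_k⊗Λ_k where each W_k is a linear operator on 𝒲 satisfying W_k = Δ_kW_kΔ_k. Then W_k*W_k = Δ_k and W_kW_k* = Δ_k for every k ∈ {1,…,n}; consequently the operator W = W_1 + ⋯ + W_n + (1_𝒲 − Δ_1 − ⋯ − Δ_n) is unitary. -/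
open Matrix
open scoped Kronecker

/-!
`Π = ∑ₖ Δₖ ⊗ Λₖ` is an orthogonal projection, so `Π A Π = A Π` is a partial isometry with
initial and final projection `Π`. Since the `Λₖ` are orthogonal projections, products of
operators of the form `∑ₖ Xₖ ⊗ Λₖ` are computed blockwise, and such an operator determines its
coefficients `Xₖ` because every `Λₖ ≠ 0`. Comparing coefficients in `(AΠ)*(AΠ) = Π = (AΠ)(AΠ)*`
gives `Wₖ* Wₖ = Δₖ = Wₖ Wₖ*`. The `Wₖ` then live on mutually orthogonal corners, so `∑ₖ Wₖ` is a
partial isometry with initial and final projection `∑ₖ Δₖ`, and adding the complementary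
projection makes it unitary.
-/

theorem Finset.sum_mul_sum_of_pairwise_mul_eq_zero {R ι : Type*} [NonUnitalNonAssocSemiring R]
    (s : Finset ι) {f g : ι → R} (h : Pairwise fun j k => f j * g k = 0) :
    (∑ j ∈ s, f j) * (∑ k ∈ s, g k) = ∑ k ∈ s, f k * g k := by
  rw [Finset.sum_mul_sum]
  refine Finset.sum_congr rfl fun j hj => Finset.sum_eq_single_of_mem j hj fun k _ hkj => ?_
  exact h hkj.symm

namespace IsStarProjection

variable {R : Type*}

theorem sum [NonUnitalNonAssocSemiring R] [StarRing R] {ι : Type*} (s : Finset ι) {p : ι → R}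
    (hp : ∀ k, IsStarProjection (p k)) (hpo : Pairwise fun j k => p j * p k = 0) :
    IsStarProjection (∑ k ∈ s, p k) where
  isIdempotentElem := by
    rw [IsIdempotentElem, Finset.sum_mul_sum_of_pairwise_mul_eq_zero s hpo]
    exact Finset.sum_congr rfl fun k _ => (hp k).isIdempotentElem
  isSelfAdjoint := isSelfAdjoint_sum s fun k _ => (hp k).isSelfAdjoint

variable [Monoid R] [StarMul R] {p a : R}

theorem star_mul_mul_self_of_mem_unitary (hp : IsStarProjection p) (ha : a ∈ unitary R) :
    star (a * p) * (a * p) = p := by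
  rw [star_mul, hp.isSelfAdjoint.star_eq, mul_assoc, ← mul_assoc (star a),
    Unitary.star_mul_self_of_mem ha, one_mul, hp.isIdempotentElem.eq]

theorem mul_mul_star_self_of_mem_unitary (hp : IsStarProjection p) (ha : a ∈ unitary R)
    (hap : Commute a p) : a * p * star (a * p) = p := by
  rw [star_mul, hp.isSelfAdjoint.star_eq, mul_assoc, ← mul_assoc p, hp.isIdempotentElem.eq,
    ← mul_assoc, hap.eq, mul_assoc, Unitary.mul_star_self_of_mem ha, mul_one]

theorem mul_mul_self_of_commute (hp : IsStarProjection p) (hap : Commute a p) :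
    p * a * p = a * p := by
  rw [← hap.eq, mul_assoc, hp.isIdempotentElem.eq]

end IsStarProjection

section Unitary

variable {R : Type*} [Ring R] [StarRing R]

theorem IsStarProjection.add_one_sub_mem_unitary {p s : R} (hp : IsStarProjection p)
    (hss : star s * s = p) (hss' : s * star s = p) (hps : p * s = s) (hsp : s * p = s) :
    s + (1 - p) ∈ unitary R := by
  have hsp' : star s * p = star s := by
    rw [← hp.isSelfAdjoint.star_eq, ← star_mul, hps]
  have hps' : p * star s = star s := by
    rw [← hp.isSelfAdjoint.star_eq, ← star_mul, hsp]
  have hstar : star (s + (1 - p)) = star s + (1 - p) := by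
    rw [star_add, star_sub, star_one, hp.isSelfAdjoint.star_eq]
  rw [Unitary.mem_iff, hstar]
  constructor
  · simp only [add_mul, mul_add, mul_sub, sub_mul, mul_one, one_mul, hss, hsp', hps,
      hp.isIdempotentElem.eq]
    abel
  · simp only [add_mul, mul_add, mul_sub, sub_mul, mul_one, one_mul, hss', hsp, hps',
      hp.isIdempotentElem.eq]
    abel

theorem sum_add_one_sub_sum_mem_unitary {ι : Type*} [Fintype ι] {p w : ι → R}
    (hp : ∀ k, IsStarProjection (p k)) (hpo : Pairwise fun j k => p j * p k = 0)
    (hw : ∀ k, w k = p k * w k * p k) (hww : ∀ k, star (w k) * w k = p k)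
    (hww' : ∀ k, w k * star (w k) = p k) :
    ∑ k, w k + (1 - ∑ k, p k) ∈ unitary R := by
  have hpw : ∀ k, p k * w k = w k := fun k => by
    rw [hw k, ← mul_assoc, ← mul_assoc, (hp k).isIdempotentElem.eq]
  have hwp : ∀ k, w k * p k = w k := fun k => by
    rw [hw k, mul_assoc, (hp k).isIdempotentElem.eq]
  have hpw' : ∀ k, p k * star (w k) = star (w k) := fun k => by
    rw [← (hp k).isSelfAdjoint.star_eq, ← star_mul, hwp]
  have hwp' : ∀ k, star (w k) * p k = star (w k) := fun k => by
    rw [← (hp k).isSelfAdjoint.star_eq, ← star_mul, hpw]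
  -- `w k` lies in the corner `p k * R * p k`, and distinct corners multiply to zero
  have ortho {x y : ι → R} (hx : ∀ k, x k * p k = x k) (hy : ∀ k, p k * y k = y k) :
      Pairwise fun j k => x j * y k = 0 := by
    intro j k hjk
    rw [← hx j, ← hy k, mul_assoc, ← mul_assoc (p j), hpo hjk, zero_mul, mul_zero]
  have hpp : ∀ k, p k * p k = p k := fun k => (hp k).isIdempotentElem.eq
  refine (IsStarProjection.sum _ hp hpo).add_one_sub_mem_unitary ?_ ?_ ?_ ?_
  · rw [star_sum, Finset.sum_mul_sum_of_pairwise_mul_eq_zero _ (ortho hwp' hpw)]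
    exact Finset.sum_congr rfl fun k _ => hww k
  · rw [star_sum, Finset.sum_mul_sum_of_pairwise_mul_eq_zero _ (ortho hwp hpw')]
    exact Finset.sum_congr rfl fun k _ => hww' k
  · rw [Finset.sum_mul_sum_of_pairwise_mul_eq_zero _ (ortho hpp hpw)]
    exact Finset.sum_congr rfl fun k _ => hpw k
  · rw [Finset.sum_mul_sum_of_pairwise_mul_eq_zero _ (ortho hwp hpp)]
    exact Finset.sum_congr rfl fun k _ => hwp k

end Unitary

namespace Matrix

variable {α ι l m n p : Type*} [Fintype ι]

theorem kronecker_left_injective [MulZeroClass α] [IsRightCancelMulZero α] {B : Matrix n p α}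
    (hB : B ≠ 0) : Function.Injective fun A : Matrix l m α => A ⊗ₖ B := by
  obtain ⟨c, d, hcd⟩ : ∃ c d, B c d ≠ 0 := by
    by_contra! h
    exact hB (Matrix.ext h)
  intro A A' h
  ext a b
  exact mul_right_cancel₀ hcd (congrFun₂ h (a, c) (b, d))

variable [CommSemiring α] {Λ : ι → Matrix n n α}

theorem conjTranspose_sum_kronecker [StarRing α] (hΛ : ∀ k, IsSelfAdjoint (Λ k))
    (X : ι → Matrix l m α) :
    (∑ k, X k ⊗ₖ Λ k)ᴴ = ∑ k, (X k)ᴴ ⊗ₖ Λ k := by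
  rw [conjTranspose_sum]
  exact Finset.sum_congr rfl fun k _ => by
    rw [conjTranspose_kronecker, ← star_eq_conjTranspose (Λ k), (hΛ k).star_eq]

variable [Fintype n]

theorem sum_kronecker_mul_sum_kronecker [Fintype m] (hΛ : ∀ k, IsIdempotentElem (Λ k))
    (hΛo : Pairwise fun j k => Λ j * Λ k = 0) (X : ι → Matrix l m α) (Y : ι → Matrix m p α) :
    (∑ k, X k ⊗ₖ Λ k) * (∑ k, Y k ⊗ₖ Λ k) = ∑ k, (X k * Y k) ⊗ₖ Λ k := by
  rw [Matrix.sum_mul]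
  refine Finset.sum_congr rfl fun j _ => ?_
  rw [Matrix.mul_sum, Finset.sum_eq_single j]
  · rw [← mul_kronecker_mul, (hΛ j).eq]
  · intro k _ hkj
    rw [← mul_kronecker_mul, hΛo hkj.symm, kronecker_zero]
  · simp

theorem sum_kronecker_injective [IsRightCancelMulZero α] [Fintype m] [DecidableEq m]
    (hΛ : ∀ k, IsIdempotentElem (Λ k)) (hΛo : Pairwise fun j k => Λ j * Λ k = 0)
    (hΛne : ∀ k, Λ k ≠ 0) :
    Function.Injective fun X : ι → Matrix l m α => ∑ k, X k ⊗ₖ Λ k := by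
  intro X Y h
  funext j
  have isolate (Z : ι → Matrix l m α) :
      (∑ k, Z k ⊗ₖ Λ k) * ((1 : Matrix m m α) ⊗ₖ Λ j) = Z j ⊗ₖ Λ j := by
    rw [Matrix.sum_mul, Finset.sum_eq_single j]
    · rw [← mul_kronecker_mul, Matrix.mul_one, (hΛ j).eq]
    · intro k _ hkj
      rw [← mul_kronecker_mul, hΛo hkj, kronecker_zero]
    · simp
  refine kronecker_left_injective (hΛne j) ?_
  change X j ⊗ₖ Λ j = Y j ⊗ₖ Λ j
  rw [← isolate, ← isolate]
  exact congrArg (· * _) h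

theorem isStarProjection_sum_kronecker [StarRing α] [Fintype m] {Δ : ι → Matrix m m α}
    (hΔ : ∀ k, IsStarProjection (Δ k)) (hΛ : ∀ k, IsStarProjection (Λ k))
    (hΛo : Pairwise fun j k => Λ j * Λ k = 0) : IsStarProjection (∑ k, Δ k ⊗ₖ Λ k) where
  isIdempotentElem := by
    rw [IsIdempotentElem,
      sum_kronecker_mul_sum_kronecker (fun k => (hΛ k).isIdempotentElem) hΛo]
    exact Finset.sum_congr rfl fun k _ => by rw [(hΔ k).isIdempotentElem.eq]
  isSelfAdjoint := by
    rw [IsSelfAdjoint, star_eq_conjTranspose,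
      conjTranspose_sum_kronecker fun k => (hΛ k).isSelfAdjoint]
    exact Finset.sum_congr rfl fun k _ => by
      rw [← star_eq_conjTranspose (Δ k), (hΔ k).isSelfAdjoint.star_eq]

end Matrix

theorem statement10_general {ιW ιZ : Type*} [Fintype ιW] [Fintype ιZ] [DecidableEq ιW] [DecidableEq ιZ]
    (n : ℕ) (Δ : Fin n → Matrix ιW ιW ℂ) (Λ : Fin n → Matrix ιZ ιZ ℂ)
    (hΔproj : ∀ k, (Δ k).IsHermitian ∧ Δ k * Δ k = Δ k)
    (hΔorth : ∀ j k, j ≠ k → Δ j * Δ k = 0)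
    (hΛproj : ∀ k, (Λ k).IsHermitian ∧ Λ k * Λ k = Λ k)
    (hΛne : ∀ k, Λ k ≠ 0)
    (hΛorth : ∀ j k, j ≠ k → Λ j * Λ k = 0)
    (A : Matrix (ιW × ιZ) (ιW × ιZ) ℂ)
    (hAunitary : A ∈ Matrix.unitaryGroup (ιW × ιZ) ℂ)
    (hAcomm : A * (∑ k, Δ k ⊗ₖ Λ k) = (∑ k, Δ k ⊗ₖ Λ k) * A)
    (W : Fin n → Matrix ιW ιW ℂ)
    (hW : ∀ k, W k = Δ k * W k * Δ k)
    (hdecomp : (∑ k, Δ k ⊗ₖ Λ k) * A * (∑ k, Δ k ⊗ₖ Λ k) = ∑ k, (W k) ⊗ₖ (Λ k)) :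
    (∀ k, (W k)ᴴ * W k = Δ k ∧ W k * (W k)ᴴ = Δ k) ∧
      ((∑ k, W k) + (1 - ∑ k, Δ k)) ∈ Matrix.unitaryGroup ιW ℂ := by
  have hΔ : ∀ k, IsStarProjection (Δ k) := fun k => ⟨(hΔproj k).2, (hΔproj k).1⟩
  have hΛ : ∀ k, IsStarProjection (Λ k) := fun k => ⟨(hΛproj k).2, (hΛproj k).1⟩
  have hΛidem k := (hΛ k).isIdempotentElem
  have hΛsa k := (hΛ k).isSelfAdjoint
  have hP := isStarProjection_sum_kronecker hΔ hΛ hΛorth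
  have hAP : ∑ k, W k ⊗ₖ Λ k = A * ∑ k, Δ k ⊗ₖ Λ k := by
    rw [← hdecomp, hP.mul_mul_self_of_commute hAcomm]
  have hcoeff := sum_kronecker_injective (l := ιW) (m := ιW) hΛidem hΛorth hΛne
  have hWW : (fun k => (W k)ᴴ * W k) = Δ := hcoeff <| by
    change ∑ k, ((W k)ᴴ * W k) ⊗ₖ Λ k = ∑ k, Δ k ⊗ₖ Λ k
    rw [← sum_kronecker_mul_sum_kronecker hΛidem hΛorth, ← conjTranspose_sum_kronecker hΛsa,
      hAP]
    exact hP.star_mul_mul_self_of_mem_unitary hAunitary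
  have hWW' : (fun k => W k * (W k)ᴴ) = Δ := hcoeff <| by
    change ∑ k, (W k * (W k)ᴴ) ⊗ₖ Λ k = ∑ k, Δ k ⊗ₖ Λ k
    rw [← sum_kronecker_mul_sum_kronecker hΛidem hΛorth, ← conjTranspose_sum_kronecker hΛsa,
      hAP]
    exact hP.mul_mul_star_self_of_mem_unitary hAunitary hAcomm
  refine ⟨fun k => ⟨congrFun hWW k, congrFun hWW' k⟩, ?_⟩
  exact sum_add_one_sub_sum_mem_unitary hΔ hΔorth hW (congrFun hWW) (congrFun hWW')

/-- Given orthogonal families of nonzero (Hermitian, idempotent) projections `Δ_k` on `𝒲`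
and `Λ_k` on `𝒵`, set `Π = Σ_k Δ_k ⊗ Λ_k`.  If `A` is a unitary on `𝒲 ⊗ 𝒵` commuting with
`Π` and `Π A Π = Σ_k W_k ⊗ Λ_k` with `W_k = Δ_k W_k Δ_k`, then `W_k* W_k = Δ_k` and
`W_k W_k* = Δ_k` for every `k`, and `W = Σ_k W_k + (1 - Σ_k Δ_k)` is unitary. -/
theorem statement10 {ιW ιZ : Type*} [Fintype ιW] [Fintype ιZ] [DecidableEq ιW] [DecidableEq ιZ]
    (n : ℕ) (Δ : Fin n → Matrix ιW ιW ℂ) (Λ : Fin n → Matrix ιZ ιZ ℂ)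
    (hΔproj : ∀ k, (Δ k).IsHermitian ∧ Δ k * Δ k = Δ k)
    (hΔne : ∀ k, Δ k ≠ 0)
    (hΔorth : ∀ j k, j ≠ k → Δ j * Δ k = 0)
    (hΛproj : ∀ k, (Λ k).IsHermitian ∧ Λ k * Λ k = Λ k)
    (hΛne : ∀ k, Λ k ≠ 0)
    (hΛorth : ∀ j k, j ≠ k → Λ j * Λ k = 0)
    (A : Matrix (ιW × ιZ) (ιW × ιZ) ℂ)
    (hAunitary : A ∈ Matrix.unitaryGroup (ιW × ιZ) ℂ)
    (hAcomm : A * (∑ k, Δ k ⊗ₖ Λ k) = (∑ k, Δ k ⊗ₖ Λ k) * A)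
    (W : Fin n → Matrix ιW ιW ℂ)
    (hW : ∀ k, W k = Δ k * W k * Δ k)
    (hdecomp : (∑ k, Δ k ⊗ₖ Λ k) * A * (∑ k, Δ k ⊗ₖ Λ k) = ∑ k, (W k) ⊗ₖ (Λ k)) :
    (∀ k, (W k)ᴴ * W k = Δ k ∧ W k * (W k)ᴴ = Δ k) ∧
      ((∑ k, W k) + (1 - ∑ k, Δ k)) ∈ Matrix.unitaryGroup ιW ℂ :=
  statement10_general n Δ Λ hΔproj hΔorth hΛproj hΛne hΛorth A hAunitary hAcomm W hW hdecomp
end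

section
/- Fix positive integers m, k and a transition function δ : Q×Γ → ℂ^{Q×Γ×{−1,+1}} of a quantum Turing machine with state set Q = {1,…,m} and tape alphabet Γ = {0,…,k−1}. If the evolution operator U_δ on ℋ is unitary, then for every integer N ≥ 5 the looped evolution operator U_{δ,N} on ℋ_N is unitary. -/
open scoped ComplexConjugate Classical

/-- Tape-head directions, `true ↦ +1` and `false ↦ -1`. -/
def dirInt (D : Bool) : ℤ := if D then 1 else -1

/-- A tape over `ℤ` with alphabet `Γ = {0, …, k-1}`: a finitely supported function
`ℤ → Fin k` (the blank symbol is `0`). -/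
def TapeZ (k : ℕ) [NeZero k] : Type := {T : ℤ → Fin k // (Function.support T).Finite}

/-- A configuration of a quantum Turing machine with state set `Q = Fin m` and tape
alphabet `Γ = Fin k`: a state, a head position, and a tape. -/
def ConfigZ (m k : ℕ) [NeZero k] : Type := Fin m × ℤ × TapeZ k

/-- Overwriting the tape square indexed by `i` with the symbol `a`. -/
noncomputable def TapeZ.update {k : ℕ} [NeZero k] (T : TapeZ k) (i : ℤ) (a : Fin k) :
    TapeZ k :=
  ⟨Function.update T.1 i a, by
    apply Set.Finite.subset (T.2.insert i)
    intro x hx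
    rcases eq_or_ne x i with h | h
    · exact h ▸ Set.mem_insert _ _
    · refine Set.mem_insert_iff.mpr (Or.inr ?_)
      simpa [Function.mem_support, Function.update_apply, h] using hx⟩

/-- The matrix (kernel) of the evolution operator `U_δ` on the Hilbert space `ℋ` spanned by
configurations: the entry indexed by `(c', c)` is the amplitude `⟨c'| U_δ |c⟩` determined by
`U_δ |p,i,T⟩ = Σ_{q,a,D} δ(p, T(i))[q,a,D] |q, i+D, T_{i,a}⟩`. -/
noncomputable def QTMkernelZ (m k : ℕ) [NeZero k]
    (δ : Fin m × Fin k → Fin m × Fin k × Bool → ℂ) :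
    ConfigZ m k → ConfigZ m k → ℂ :=
  fun c' c => ∑ x : Fin m × Fin k × Bool,
    if c'.1 = x.1 ∧ c'.2.1 = c.2.1 + dirInt x.2.2 ∧
        c'.2.2 = TapeZ.update c.2.2 c.2.1 x.2.1
    then δ (c.1, c.2.2.1 c.2.1) x else 0

/-- A kernel `M : α → α → ℂ` is unitary if `M* M = 1` and `M M* = 1`, where the matrix
products are given by (absolutely convergent) sums over `α`; this expresses that the
induced operator on `ℓ²(α)` is unitary. -/
def IsUnitaryKernel {α : Type*} (M : α → α → ℂ) : Prop :=
  (∀ c₁ c₂ : α, ∑' c : α, conj (M c c₁) * M c c₂ = if c₁ = c₂ then 1 else 0) ∧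
  (∀ c₁ c₂ : α, ∑' c : α, M c₁ c * conj (M c₂ c) = if c₁ = c₂ then 1 else 0)

/-- A configuration of the machine running on a tape loop of length `N`. -/
abbrev ConfigN (m k N : ℕ) : Type := Fin m × ZMod N × (ZMod N → Fin k)

/-- The matrix of the looped evolution operator `U_{δ,N}` on `ℋ_N`, defined by the same
formula as `U_δ` with head movement computed modulo `N`. -/
noncomputable def QTMkernelN (m k N : ℕ) [NeZero N]
    (δ : Fin m × Fin k → Fin m × Fin k × Bool → ℂ) :
    Matrix (ConfigN m k N) (ConfigN m k N) ℂ :=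
  Matrix.of fun c' c => ∑ x : Fin m × Fin k × Bool,
    if c'.1 = x.1 ∧ c'.2.1 = c.2.1 + (dirInt x.2.2 : ZMod N) ∧
        c'.2.2 = Function.update c.2.2 c.2.1 x.2.1
    then δ (c.1, c.2.2 c.2.1) x else 0

/-! The inner product `⟨U c₁, U c₂⟩` of two columns of a machine whose head moves in an
additive group `G` is a sum over pairs of transitions of `c₁` and `c₂` leading to the same
configuration. When `2 ≠ 0` and `4 ≠ 0` in `G`, such pairs exist only if the two heads are at
distance `0` or `2` and the tapes agree elsewhere, and the sum is then one of two local sums in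
`δ`. Over `ℤ`, unitarity of `U_δ` at configurations with one or two written cells says that the
first local sum is that of an orthonormal family and the second vanishes; over `ℤ/N` this gives
back `⟨U c₁, U c₂⟩ = [c₁ = c₂]`. -/

section StepKernel

variable {C X : Type*} [Fintype X]

noncomputable def stepKernel (s : C → X → C) (a : C → X → ℂ) (c' c : C) : ℂ :=
  ∑ x, if c' = s c x then a c x else 0

noncomputable def stepGram (s : C → X → C) (a : C → X → ℂ) (c₁ c₂ : C) : ℂ :=
  ∑ x₁, ∑ x₂, if s c₁ x₁ = s c₂ x₂ then conj (a c₁ x₁) * a c₂ x₂ else 0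

theorem tsum_conj_stepKernel_mul (s : C → X → C) (a : C → X → ℂ) (c₁ c₂ : C) :
    ∑' c, conj (stepKernel s a c c₁) * stepKernel s a c c₂ = stepGram s a c₁ c₂ := by
  have hterm : ∀ (u v : C) (z w : ℂ) (c : C),
      (if c = u then z else 0) * (if c = v then w else 0)
        = if c = u then (if u = v then z * w else 0) else 0 := by
    intro u v z w c
    by_cases hu : c = u
    · subst hu; split_ifs <;> simp
    · simp [hu]
  simp only [stepKernel, map_sum, apply_ite conj, map_zero, Finset.sum_mul_sum, hterm]
  have hsum : ∀ (u : C) (z : ℂ), Summable fun c : C => if c = u then z else 0 :=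
    fun u z => (hasSum_ite_eq u z).summable
  rw [Summable.tsum_finsetSum fun _ _ => summable_sum fun _ _ => hsum _ _]
  simp only [Summable.tsum_finsetSum fun _ _ => hsum _ _, tsum_ite_eq]
  rfl

theorem stepGram_swap (s : C → X → C) (a : C → X → ℂ) (c₁ c₂ : C) :
    stepGram s a c₂ c₁ = conj (stepGram s a c₁ c₂) := by
  simp only [stepGram, map_sum, apply_ite conj, map_zero, map_mul, Complex.conj_conj]
  rw [Finset.sum_comm]
  simp only [eq_comm, mul_comm]

theorem stepGram_map {C' : Type*} {s : C → X → C} {a : C → X → ℂ} {s' : C' → X → C'}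
    {a' : C' → X → ℂ} (φ : C → C') (hφ : Function.Injective φ)
    (hs : ∀ c x, φ (s c x) = s' (φ c) x) (ha : ∀ c, a' (φ c) = a c) (c₁ c₂ : C) :
    stepGram s a c₁ c₂ = stepGram s' a' (φ c₁) (φ c₂) := by
  simp only [stepGram, ← hs, hφ.eq_iff, ha]

end StepKernel

section Machine

variable {Q Γ G : Type*} [AddGroupWithOne G]

theorem add_dirInt_eq_add_dirInt_iff {i₁ i₂ : G} {D₁ D₂ : Bool} :
    i₁ + dirInt D₁ = i₂ + dirInt D₂ ↔ (i₁ = i₂ ∧ D₁ = D₂) ∨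
      (i₂ = i₁ + 2 ∧ D₁ = true ∧ D₂ = false) ∨ (i₁ = i₂ + 2 ∧ D₁ = false ∧ D₂ = true) := by
  have h : ∀ a b : G, a + 1 = b + -1 ↔ b = a + 2 := fun a b => by
    rw [eq_comm, add_neg_eq_iff_eq_add, add_assoc, one_add_one_eq_two]
  cases D₁ <;> cases D₂ <;> simp [dirInt, h, eq_comm]

theorem Function.eqOn_compl_pair_of_update_eq_update {α β : Type*} [DecidableEq α]
    {f g : α → β} {i j : α} {a b : β} (h : Function.update f i a = Function.update g j b) :
    Set.EqOn f g {i, j}ᶜ := fun x hx => by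
  simp only [Set.mem_compl_iff, Set.mem_insert_iff, Set.mem_singleton_iff, not_or] at hx
  simpa [Function.update_of_ne hx.1, Function.update_of_ne hx.2] using congrFun h x

variable [DecidableEq G]

/-- Tapes are arbitrary functions `G → Γ`: `G = ZMod N` is the loop, and `ConfigZ` embeds via
`ConfigZ.toFun` for `G = ℤ`. -/
def qtmStep (c : Q × G × (G → Γ)) (x : Q × Γ × Bool) : Q × G × (G → Γ) :=
  (x.1, c.2.1 + dirInt x.2.2, Function.update c.2.2 c.2.1 x.2.1)

def qtmAmp (δ : Q × Γ → Q × Γ × Bool → ℂ) (c : Q × G × (G → Γ)) : Q × Γ × Bool → ℂ :=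
  δ (c.1, c.2.2 c.2.1)

theorem qtmStep_eq_qtmStep_same_head (h2 : (2 : G) ≠ 0) {p₁ p₂ : Q} {i : G} {T₁ T₂ : G → Γ}
    (hT : Set.EqOn T₁ T₂ {i}ᶜ) {x₁ x₂ : Q × Γ × Bool} :
    qtmStep (p₁, i, T₁) x₁ = qtmStep (p₂, i, T₂) x₂ ↔ x₂ = x₁ := by
  constructor
  · intro h
    simp only [qtmStep, Prod.mk.injEq, add_dirInt_eq_add_dirInt_iff] at h
    obtain ⟨hq, hD, hT'⟩ := h
    simp [h2] at hD
    have hb : x₁.2.1 = x₂.2.1 := by simpa using congrFun hT' i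
    exact Prod.ext hq.symm (Prod.ext hb.symm hD.symm)
  · rintro rfl
    simp only [qtmStep, Prod.mk.injEq, true_and]
    funext j
    by_cases hj : j = i
    · subst hj; simp
    · simp [Function.update_of_ne hj, hT hj]

theorem qtmStep_eq_qtmStep_head_add_two (h2 : (2 : G) ≠ 0) (h4 : (4 : G) ≠ 0) {p₁ p₂ : Q}
    {i : G} {T₁ T₂ : G → Γ} (hT : Set.EqOn T₁ T₂ {i, i + 2}ᶜ) {x₁ x₂ : Q × Γ × Bool} :
    qtmStep (p₁, i, T₁) x₁ = qtmStep (p₂, i + 2, T₂) x₂ ↔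
      x₁.2 = (T₂ i, true) ∧ x₂ = (x₁.1, T₁ (i + 2), false) := by
  have hi : i ≠ i + 2 := by simpa using h2
  have hi' : i ≠ i + 2 + 2 := by rw [add_assoc, two_add_two_eq_four]; simpa using h4
  simp only [qtmStep, Prod.mk.injEq, add_dirInt_eq_add_dirInt_iff]
  constructor
  · rintro ⟨hq, hD, hT'⟩
    simp only [hi, hi', false_and, true_and, false_or, or_false] at hD
    have hb₁ := congrFun hT' i
    have hb₂ := congrFun hT' (i + 2)
    rw [Function.update_self, Function.update_of_ne hi] at hb₁
    rw [Function.update_self, Function.update_of_ne hi.symm] at hb₂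
    exact ⟨Prod.ext hb₁ hD.1, Prod.ext hq.symm (Prod.ext hb₂.symm hD.2)⟩
  · rintro ⟨hx₁, rfl⟩
    simp only [Prod.ext_iff] at hx₁
    refine ⟨rfl, by simp [hx₁.2], funext fun j => ?_⟩
    by_cases hj : j = i
    · subst hj; simp [Function.update_of_ne hi, hx₁.1]
    by_cases hj' : j = i + 2
    · subst hj'; simp [Function.update_of_ne hi.symm]
    · have hj_mem : j ∈ ({i, i + 2} : Set G)ᶜ := by simp [hj, hj']
      simp [Function.update_of_ne hj, Function.update_of_ne hj', hT hj_mem]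

variable [Fintype Q] [Fintype Γ]

theorem stepGram_qtmStep_same_head (h2 : (2 : G) ≠ 0) (δ : Q × Γ → Q × Γ × Bool → ℂ)
    (p₁ p₂ : Q) {i : G} {T₁ T₂ : G → Γ} (hT : Set.EqOn T₁ T₂ {i}ᶜ) :
    stepGram qtmStep (qtmAmp δ) (p₁, i, T₁) (p₂, i, T₂) =
      ∑ x, conj (δ (p₁, T₁ i) x) * δ (p₂, T₂ i) x := by
  simp only [stepGram, qtmStep_eq_qtmStep_same_head h2 hT, Finset.sum_ite_eq', Finset.mem_univ,
    if_true]
  rfl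

theorem stepGram_qtmStep_head_add_two (h2 : (2 : G) ≠ 0) (h4 : (4 : G) ≠ 0)
    (δ : Q × Γ → Q × Γ × Bool → ℂ) (p₁ p₂ : Q) {i : G} {T₁ T₂ : G → Γ}
    (hT : Set.EqOn T₁ T₂ {i, i + 2}ᶜ) :
    stepGram qtmStep (qtmAmp δ) (p₁, i, T₁) (p₂, i + 2, T₂) =
      ∑ q, conj (δ (p₁, T₁ i) (q, T₂ i, true)) * δ (p₂, T₂ (i + 2)) (q, T₁ (i + 2), false) := by
  simp only [stepGram, qtmStep_eq_qtmStep_head_add_two h2 h4 hT, ite_and, Finset.sum_ite_irrel,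
    Finset.sum_ite_eq', Finset.mem_univ, if_true, Finset.sum_const_zero, Fintype.sum_prod_type]
  rfl

/-- The local conditions of Bernstein and Vazirani for the transition function `δ`. -/
structure IsLocallyUnitary (δ : Q × Γ → Q × Γ × Bool → ℂ) : Prop where
  orthonormal : ∀ s t, ∑ x, conj (δ s x) * δ t x = if s = t then 1 else 0
  separable : ∀ s t b₁ b₂, ∑ q, conj (δ s (q, b₁, true)) * δ t (q, b₂, false) = 0

theorem IsLocallyUnitary.stepGram_qtmStep {δ : Q × Γ → Q × Γ × Bool → ℂ}
    (hδ : IsLocallyUnitary δ) (h2 : (2 : G) ≠ 0) (h4 : (4 : G) ≠ 0) (c₁ c₂ : Q × G × (G → Γ)) :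
    stepGram qtmStep (qtmAmp δ) c₁ c₂ = if c₁ = c₂ then 1 else 0 := by
  obtain ⟨p₁, i₁, T₁⟩ := c₁
  obtain ⟨p₂, i₂, T₂⟩ := c₂
  by_cases hmeet : ∃ x₁ x₂, qtmStep (p₁, i₁, T₁) x₁ = qtmStep (p₂, i₂, T₂) x₂
  swap
  · push Not at hmeet
    have hne : (p₁, i₁, T₁) ≠ (p₂, i₂, T₂) := fun h =>
      hmeet (p₁, T₁ 0, true) (p₁, T₁ 0, true) (congrArg (qtmStep · (p₁, T₁ 0, true)) h)
    simp [stepGram, hmeet, hne]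
  obtain ⟨x₁, x₂, hx⟩ := hmeet
  simp only [qtmStep, Prod.mk.injEq, add_dirInt_eq_add_dirInt_iff] at hx
  obtain ⟨-, hi, hT⟩ := hx
  have hT := Function.eqOn_compl_pair_of_update_eq_update hT
  rcases hi with ⟨rfl, -⟩ | ⟨rfl, -⟩ | ⟨rfl, -⟩
  · rw [Set.pair_eq_singleton] at hT
    have hiff : (p₁, T₁ i₁) = (p₂, T₂ i₁) ↔ (p₁, i₁, T₁) = (p₂, i₁, T₂) := by
      simp only [Prod.mk.injEq, true_and]
      refine and_congr_right fun _ => ⟨fun h => funext fun j => ?_, fun h => h ▸ rfl⟩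
      by_cases hj : j = i₁
      · exact hj ▸ h
      · exact hT hj
    rw [stepGram_qtmStep_same_head h2 δ p₁ p₂ hT, hδ.orthonormal, if_congr hiff rfl rfl]
  · rw [stepGram_qtmStep_head_add_two h2 h4 δ p₁ p₂ hT, hδ.separable, if_neg]
    simp [h2]
  · rw [Set.pair_comm] at hT
    rw [stepGram_swap, stepGram_qtmStep_head_add_two h2 h4 δ p₂ p₁ hT.symm, hδ.separable,
      map_zero, if_neg]
    simp [h2]

end Machine

section Integers

variable {m k : ℕ} [NeZero k]

def TapeZ.blank : TapeZ k := ⟨0, by simp⟩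

@[simp]
theorem TapeZ.val_blank : (TapeZ.blank : TapeZ k).1 = 0 := rfl

@[simp]
theorem TapeZ.val_update (T : TapeZ k) (i : ℤ) (a : Fin k) :
    (T.update i a).1 = Function.update T.1 i a := rfl

def ConfigZ.toFun (c : ConfigZ m k) : Fin m × ℤ × (ℤ → Fin k) := (c.1, c.2.1, c.2.2.1)

@[simp]
theorem ConfigZ.toFun_mk (p : Fin m) (i : ℤ) (T : TapeZ k) :
    ConfigZ.toFun ((p, i, T) : Fin m × ℤ × TapeZ k) = (p, i, T.1) := rfl

theorem ConfigZ.toFun_injective : Function.Injective (ConfigZ.toFun (m := m) (k := k)) := by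
  rintro ⟨p, i, T⟩ ⟨p', i', T'⟩ h
  simp only [ConfigZ.toFun, Prod.mk.injEq] at h
  obtain ⟨rfl, rfl, h⟩ := h
  exact Prod.ext rfl (Prod.ext rfl (Subtype.ext h))

noncomputable def ConfigZ.step (c : ConfigZ m k) (x : Fin m × Fin k × Bool) : ConfigZ m k :=
  (x.1, c.2.1 + dirInt x.2.2, c.2.2.update c.2.1 x.2.1)

theorem QTMkernelZ_eq_stepKernel (δ : Fin m × Fin k → Fin m × Fin k × Bool → ℂ) :
    QTMkernelZ m k δ = stepKernel ConfigZ.step fun c => qtmAmp δ c.toFun := by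
  ext c' c
  refine Finset.sum_congr rfl fun x _ => if_congr ?_ rfl rfl
  exact ⟨fun ⟨h₁, h₂, h₃⟩ => Prod.ext h₁ (Prod.ext h₂ h₃), fun h => h ▸ ⟨rfl, rfl, rfl⟩⟩

theorem stepGram_qtmStep_toFun_of_isUnitaryKernel {δ : Fin m × Fin k → Fin m × Fin k × Bool → ℂ}
    (hδ : IsUnitaryKernel (QTMkernelZ m k δ)) (c₁ c₂ : ConfigZ m k) :
    stepGram qtmStep (qtmAmp δ) c₁.toFun c₂.toFun = if c₁.toFun = c₂.toFun then 1 else 0 := by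
  rw [← stepGram_map (s := ConfigZ.step) ConfigZ.toFun ConfigZ.toFun_injective (fun _ _ => rfl)
      (fun _ => rfl),
    ← tsum_conj_stepKernel_mul, ← QTMkernelZ_eq_stepKernel, hδ.1 c₁ c₂]
  exact if_congr ConfigZ.toFun_injective.eq_iff.symm rfl rfl

theorem isLocallyUnitary_of_isUnitaryKernel {δ : Fin m × Fin k → Fin m × Fin k × Bool → ℂ}
    (hδ : IsUnitaryKernel (QTMkernelZ m k δ)) : IsLocallyUnitary δ where
  orthonormal := by
    rintro ⟨p₁, a₁⟩ ⟨p₂, a₂⟩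
    have h := stepGram_qtmStep_toFun_of_isUnitaryKernel hδ (p₁, 0, TapeZ.blank.update 0 a₁)
      (p₂, 0, TapeZ.blank.update 0 a₂)
    have hT : Set.EqOn (Function.update 0 0 a₁) (Function.update 0 0 a₂) ({0}ᶜ : Set ℤ) :=
      fun j hj => by simp [Function.update_of_ne (Set.mem_compl_singleton_iff.mp hj)]
    simp only [ConfigZ.toFun_mk, TapeZ.val_update, TapeZ.val_blank] at h
    rw [stepGram_qtmStep_same_head two_ne_zero δ p₁ p₂ hT] at h
    simpa [(Function.update_injective _ _).eq_iff] using h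
  separable := by
    rintro ⟨p₁, a₁⟩ ⟨p₂, a₂⟩ b₁ b₂
    have h := stepGram_qtmStep_toFun_of_isUnitaryKernel hδ
      (p₁, 0, (TapeZ.blank.update 2 b₂).update 0 a₁) (p₂, 2, (TapeZ.blank.update 2 a₂).update 0 b₁)
    have hT : Set.EqOn (Function.update (Function.update 0 2 b₂) 0 a₁)
        (Function.update (Function.update 0 2 a₂) 0 b₁) ({0, 0 + 2}ᶜ : Set ℤ) := fun j hj => by
      simp only [zero_add, Set.mem_compl_iff, Set.mem_insert_iff, Set.mem_singleton_iff,
        not_or] at hj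
      simp [Function.update_of_ne hj.1, Function.update_of_ne hj.2]
    have hgram := stepGram_qtmStep_head_add_two two_ne_zero four_ne_zero δ p₁ p₂ hT
    simp only [ConfigZ.toFun_mk, TapeZ.val_update, TapeZ.val_blank] at h
    rw [zero_add] at hgram
    simpa [hgram] using h

end Integers

theorem QTMkernelN_eq_stepKernel (m k N : ℕ) [NeZero N]
    (δ : Fin m × Fin k → Fin m × Fin k × Bool → ℂ) :
    QTMkernelN m k N δ = Matrix.of (stepKernel qtmStep (qtmAmp δ)) := by
  ext c' c
  refine Finset.sum_congr rfl fun x _ => ?_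
  congr 1
  exact propext ⟨fun ⟨h₁, h₂, h₃⟩ => Prod.ext h₁ (Prod.ext h₂ h₃), fun h => h ▸ ⟨rfl, rfl, rfl⟩⟩

theorem ZMod.natCast_ne_zero_of_pos_of_lt {a N : ℕ} (ha : 0 < a) (haN : a < N) :
    (a : ZMod N) ≠ 0 := by
  rw [Ne, ZMod.natCast_eq_zero_iff]
  exact Nat.not_dvd_of_pos_of_lt ha haN

theorem statement11_general {m k : ℕ} [NeZero k]
    (δ : Fin m × Fin k → Fin m × Fin k × Bool → ℂ)
    (hδ : IsUnitaryKernel (QTMkernelZ m k δ))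
    (N : ℕ) [NeZero N] (hN : 5 ≤ N) :
    QTMkernelN m k N δ ∈ Matrix.unitaryGroup (ConfigN m k N) ℂ := by
  have h2 : (2 : ZMod N) ≠ 0 := by
    exact_mod_cast ZMod.natCast_ne_zero_of_pos_of_lt two_pos (by omega)
  have h4 : (4 : ZMod N) ≠ 0 := by
    exact_mod_cast ZMod.natCast_ne_zero_of_pos_of_lt four_pos (by omega)
  rw [Matrix.mem_unitaryGroup_iff']
  ext c₁ c₂
  have hgram := (isLocallyUnitary_of_isUnitaryKernel hδ).stepGram_qtmStep h2 h4 c₁ c₂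
  rw [← tsum_conj_stepKernel_mul, tsum_fintype] at hgram
  rw [Matrix.mul_apply, Matrix.one_apply, QTMkernelN_eq_stepKernel]
  convert hgram using 2
  rfl

/-- If the evolution operator `U_δ` of a quantum Turing machine is unitary, then for every
`N ≥ 5` the looped evolution operator `U_{δ,N}` is unitary. -/
theorem statement11 {m k : ℕ} [NeZero m] [NeZero k]
    (δ : Fin m × Fin k → Fin m × Fin k × Bool → ℂ)
    (hδ : IsUnitaryKernel (QTMkernelZ m k δ))
    (N : ℕ) [NeZero N] (hN : 5 ≤ N) :
    QTMkernelN m k N δ ∈ Matrix.unitaryGroup (ConfigN m k N) ℂ :=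
  statement11_general δ hδ N hN
end

section
/- Fix positive integers m, k, an integer N ≥ 5, and a transition function δ : Q×Γ → ℂ^{Q×Γ×{−1,+1}} of a quantum Turing machine with state set Q = {1,…,m} and tape alphabet Γ = {0,…,k−1}. Then A*(F_0F_1⋯F_{N−1})A = 0; equivalently, the operator F_0F_1⋯F_{N−1} maps im(A) into the orthogonal complement of im(A). -/
open Matrix
open scoped Classical

/-- The index set `{-m, …, m}` of the standard basis of the space `𝒮 = ℂ^{2m+1}` attached
to each tape square. -/
abbrev Slot (m : ℕ) : Type := {s : ℤ // s ∈ Finset.Icc (-(m : ℤ)) (m : ℤ)}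

/-- The slot value `0`, indicating the absence of the tape head. -/
def slotZero (m : ℕ) : Slot m := ⟨0, by simp only [Finset.mem_Icc]; omega⟩

/-- The negation map `s ↦ -s` on `{-m, …, m}`. -/
def slotNeg {m : ℕ} (s : Slot m) : Slot m :=
  ⟨-s.1, by have := s.2; simp only [Finset.mem_Icc] at *; omega⟩

/-- The slot value recording the (active) state `p`; the state `p : Fin m` is identified
with the value `p + 1 ∈ {1, …, m}`. -/
def slotState {m : ℕ} (p : Fin m) : Slot m :=
  ⟨(p : ℤ) + 1, by have := p.isLt; simp only [Finset.mem_Icc]; omega⟩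

/-- The index set of the standard basis of `𝒦_N = ⊗_{i ∈ ℤ_N} (𝒮_i ⊗ 𝒯_i)`. -/
abbrev KIdx (m k N : ℕ) : Type := ZMod N → Slot m × Fin k

/-- The standard basis vector `f(p,i,T)` of `𝒦_N` associated to a configuration:
`𝒮_i` holds `p`, `𝒮_j` holds `0` for `j ≠ i`, and `𝒯_j` holds `T(j)`. -/
def fConf {m k N : ℕ} (c : ConfigN m k N) : KIdx m k N :=
  fun j => (if j = c.2.1 then slotState c.1 else slotZero m, c.2.2 j)

/-- The isometry `A = Σ_{(p,i,T)} |f(p,i,T)⟩⟨p,i,T|` from `ℋ_N` to `𝒦_N`, as a matrix. -/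
noncomputable def Amat (m k N : ℕ) : Matrix (KIdx m k N) (ConfigN m k N) ℂ :=
  Matrix.of fun b c => if b = fConf c then 1 else 0

/-- The unitary `F_i` on `𝒦_N` applying `F : |s⟩ ↦ |-s⟩` to the factor `𝒮_i` and the
identity to all other factors, as a matrix. -/
noncomputable def Fmat (m k N : ℕ) [NeZero N] (i : ZMod N) :
    Matrix (KIdx m k N) (KIdx m k N) ℂ :=
  Matrix.of fun b b' =>
    if b = Function.update b' i (slotNeg (b' i).1, (b' i).2) then 1 else 0

/-- The product `F_0 F_1 ⋯ F_{N-1}`, which applies `F : |s⟩ ↦ |-s⟩` independently to every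
factor `𝒮_0, …, 𝒮_{N-1}` of `𝒦_N`. -/
noncomputable def FallMat (m k N : ℕ) : Matrix (KIdx m k N) (KIdx m k N) ℂ :=
  Matrix.of fun b b' =>
    if b = (fun j => (slotNeg (b' j).1, (b' j).2)) then 1 else 0

/-- The unitary `V = A U_{δ,N} A* + (1 - A A*)` on `𝒦_N`. -/
noncomputable def Vmat (m k N : ℕ) [NeZero N]
    (δ : Fin m × Fin k → Fin m × Fin k × Bool → ℂ) :
    Matrix (KIdx m k N) (KIdx m k N) ℂ :=
  Amat m k N * QTMkernelN m k N δ * (Amat m k N)ᴴ +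
    (1 - Amat m k N * (Amat m k N)ᴴ)

/-- The orthogonal projection `Π` of `𝒦_N` onto the span of the standard basis vectors in
which exactly one of the factors `𝒮_0, …, 𝒮_{N-1}` holds a nonzero value. -/
noncomputable def PiMat (m k N : ℕ) [NeZero N] : Matrix (KIdx m k N) (KIdx m k N) ℂ :=
  Matrix.of fun b b' =>
    if b = b' ∧ (Finset.univ.filter fun j : ZMod N => (b j).1 ≠ slotZero m).card = 1
    then 1 else 0

/-- The partial trace of an operator on `𝒦_N` down to the tensor factors `𝒮_j ⊗ 𝒯_j` with
`j ∈ S`, tracing out all factors with `j ∉ S`. -/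
noncomputable def reduceTo {m k N : ℕ} [NeZero N] (S : Finset (ZMod N))
    (M : Matrix (KIdx m k N) (KIdx m k N) ℂ) :
    Matrix ({j : ZMod N // j ∈ S} → Slot m × Fin k)
      ({j : ZMod N // j ∈ S} → Slot m × Fin k) ℂ :=
  Matrix.of fun g g' => ∑ h : {j : ZMod N // j ∉ S} → Slot m × Fin k,
    M (fun j => if hj : j ∈ S then g ⟨j, hj⟩ else h ⟨j, hj⟩)
      (fun j => if hj : j ∈ S then g' ⟨j, hj⟩ else h ⟨j, hj⟩)

theorem conjTranspose_Amat_mul_mul_Amat_apply {m k N : ℕ} [NeZero N]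
    (M : Matrix (KIdx m k N) (KIdx m k N) ℂ) (c' c : ConfigN m k N) :
    ((Amat m k N)ᴴ * M * Amat m k N) c' c = M (fConf c') (fConf c) := by
  simp [Matrix.mul_apply, Amat, Finset.sum_ite_eq']

theorem fConf_apply_fst_nonneg {m k N : ℕ} (c : ConfigN m k N) (j : ZMod N) :
    0 ≤ ((fConf c j).1 : ℤ) := by
  unfold fConf
  split_ifs <;> simp only [slotState, slotZero] <;> omega

theorem slotNeg_slotState_neg {m : ℕ} (p : Fin m) : ((slotNeg (slotState p)) : ℤ) < 0 := by
  simp only [slotNeg, slotState]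
  omega

/-- Flipping every slot of `f(p,i,T)` puts `-(p+1) < 0` at the head position, a value that no
`f(c')` carries. -/
theorem fConf_ne_slotNeg_fConf {m k N : ℕ} (c' c : ConfigN m k N) :
    fConf c' ≠ fun j => (slotNeg (fConf c j).1, (fConf c j).2) := by
  intro h
  have hslot := congrArg (fun b : KIdx m k N => ((b c.2.1).1 : ℤ)) h
  have hhead : (fConf c c.2.1).1 = slotState c.1 := by simp [fConf]
  simp only [hhead] at hslot
  have hnonneg := fConf_apply_fst_nonneg c' c.2.1
  have hneg := slotNeg_slotState_neg c.1
  omega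

theorem statement12_general {m k : ℕ} {N : ℕ} [NeZero N] :
    (Amat m k N)ᴴ * FallMat m k N * Amat m k N = 0 := by
  ext c' c
  rw [conjTranspose_Amat_mul_mul_Amat_apply]
  simp [FallMat, fConf_ne_slotNeg_fConf]

/-- `A* (F_0 F_1 ⋯ F_{N-1}) A = 0`: the operator `F_0 ⋯ F_{N-1}` maps the image of the
isometry `A` into its orthogonal complement. -/
theorem statement12 {m k : ℕ} [NeZero m] [NeZero k] {N : ℕ} [NeZero N] (hN : 5 ≤ N)
    (δ : Fin m × Fin k → Fin m × Fin k × Bool → ℂ) :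
    (Amat m k N)ᴴ * FallMat m k N * Amat m k N = 0 :=
  statement12_general
end
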